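/- arXiv:math/9711214 — 3 statements merged into one kernel-verified Lean document; each statement's English description precedes it below -/
import Mathlib

section
/- Let h : S^1 → S^1 be a homeomorphism and let {𝒬ₙ}_{n≥0} be a fine grid. If there exists C > 0 such that ||I|/|J| − |h(I)|/|h(J)|| ≤ C for each pair of adjacent atoms I, J ∈ 𝒬ₙ and all n ≥ 0, then h is quasisymmetric. -/
/-- A fine grid: a sequence of finite partitions of the circle `ℝ/ℤ`, encoded by their
(lifted) cut points.  The `n`-th partition has `N n` atoms, with cut points
`t n 0 < t n 1 < ⋯` extended periodically (`t n (k + N n) = t n k + 1`); its atoms are the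
arcs `[t n k, t n (k+1)]`.  Each partition strictly refines the previous one: every cut
point of level `n` is a cut point of level `n+1`, and each atom of level `n` is the union
of at least `2` and at most `a` atoms of level `n+1`.  Adjacent atoms of a given level
have `c`-comparable lengths. -/
structure FineGrid where
  N : ℕ → ℕ
  t : ℕ → ℕ → ℝ
  a : ℕ
  c : ℝ
  Npos : ∀ n, 0 < N n
  apos : 0 < a
  cpos : 0 < c
  mono : ∀ n, StrictMono (t n)
  periodic : ∀ n k, t n (k + N n) = t n k + 1
  subdiv : ∀ n k, ∃ j m, 2 ≤ m ∧ m ≤ a ∧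
    t (n + 1) j = t n k ∧ t (n + 1) (j + m) = t n (k + 1)
  adj : ∀ n k, c⁻¹ * (t n (k + 1) - t n k) ≤ t n (k + 2) - t n (k + 1) ∧
    t n (k + 2) - t n (k + 1) ≤ c * (t n (k + 1) - t n k)

/-- A (lift of a degree-one, orientation-preserving) circle homeomorphism. -/
def IsCircleHomeoLift (H : ℝ → ℝ) : Prop :=
  Continuous H ∧ StrictMono H ∧ ∀ x, H (x + 1) = H x + 1

/-- Quasisymmetry for a circle homeomorphism in terms of a lift: there is `K ≥ 1` such
that images of adjacent arcs of equal length have `K`-comparable lengths. -/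
def QuasiSymmLift (H : ℝ → ℝ) : Prop :=
  ∃ K : ℝ, 1 ≤ K ∧ ∀ x d : ℝ, 0 < d → 2 * d ≤ 1 →
    K⁻¹ ≤ (H (x + d) - H x) / (H x - H (x - d)) ∧
    (H (x + d) - H x) / (H x - H (x - d)) ≤ K

namespace QS43aux

lemma chain_up {f : ℕ → ℝ} {c : ℝ} (hc : 0 ≤ c)
    (h1 : ∀ i, f (i + 1) ≤ c * f i) : ∀ k j, f (k + j) ≤ c ^ j * f k := by
  intro k j
  induction j with
  | zero => simp
  | succ j ih =>
    have h3 : c * f (k + j) ≤ c * (c ^ j * f k) := mul_le_mul_of_nonneg_left ih hc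
    calc f (k + (j + 1)) ≤ c * f (k + j) := h1 (k + j)
      _ ≤ c * (c ^ j * f k) := h3
      _ = c ^ (j + 1) * f k := by ring

lemma chain_down {f : ℕ → ℝ} {c : ℝ} (hc : 0 ≤ c)
    (h2 : ∀ i, f i ≤ c * f (i + 1)) : ∀ k j, f k ≤ c ^ j * f (k + j) := by
  intro k j
  induction j with
  | zero => simp
  | succ j ih =>
    have h3 : c ^ j * f (k + j) ≤ c ^ j * (c * f (k + j + 1)) :=
      mul_le_mul_of_nonneg_left (h2 (k + j)) (pow_nonneg hc j)
    show f k ≤ c ^ (j + 1) * f (k + j + 1)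
    calc f k ≤ c ^ j * f (k + j) := ih
      _ ≤ c ^ j * (c * f (k + j + 1)) := h3
      _ = c ^ (j + 1) * f (k + j + 1) := by ring

lemma chain_window {f : ℕ → ℝ} {c : ℝ} (hc : 1 ≤ c) (hp : ∀ i, 0 < f i)
    (h1 : ∀ i, f (i + 1) ≤ c * f i) (h2 : ∀ i, f i ≤ c * f (i + 1))
    (p q w : ℕ) (hpq : p ≤ q + w) (hqp : q ≤ p + w) : f p ≤ c ^ w * f q := by
  have hc0 : (0:ℝ) ≤ c := le_trans zero_le_one hc
  rcases le_total p q with h | h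
  · obtain ⟨j, rfl⟩ := Nat.exists_eq_add_of_le h
    have hjw : j ≤ w := by omega
    calc f p ≤ c ^ j * f (p + j) := chain_down hc0 h2 p j
      _ ≤ c ^ w * f (p + j) :=
        mul_le_mul_of_nonneg_right (pow_le_pow_right₀ hc hjw) (hp _).le
  · obtain ⟨j, rfl⟩ := Nat.exists_eq_add_of_le h
    have hjw : j ≤ w := by omega
    calc f (q + j) ≤ c ^ j * f q := chain_up hc0 h1 q j
      _ ≤ c ^ w * f q :=
        mul_le_mul_of_nonneg_right (pow_le_pow_right₀ hc hjw) (hp q).le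

lemma t_zero_le (Q : FineGrid) : ∀ n, Q.t n 0 ≤ Q.t 0 0 := by
  intro n
  induction n with
  | zero => exact le_refl _
  | succ n ih =>
    obtain ⟨j, m, -, -, hj, -⟩ := Q.subdiv n 0
    calc Q.t (n + 1) 0 ≤ Q.t (n + 1) j := (Q.mono (n + 1)).monotone (Nat.zero_le j)
      _ = Q.t n 0 := hj
      _ ≤ Q.t 0 0 := ih

lemma t_add_period (Q : FineGrid) (n k : ℕ) : ∀ q : ℕ,
    Q.t n (k + q * Q.N n) = Q.t n k + q := by
  intro q
  induction q with
  | zero => simp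
  | succ q ih =>
    have h := Q.periodic n (k + q * Q.N n)
    have e : k + (q + 1) * Q.N n = k + q * Q.N n + Q.N n := by ring
    rw [e, h, ih]
    push_cast
    ring

lemma exists_idx (Q : FineGrid) (n : ℕ) (y : ℝ) (hy : Q.t n 0 ≤ y) :
    ∃ k, Q.t n k ≤ y ∧ y < Q.t n (k + 1) := by
  classical
  have hex : ∃ j, y < Q.t n j := by
    refine ⟨0 + (⌈y - Q.t n 0⌉₊ + 1) * Q.N n, ?_⟩
    rw [t_add_period Q n 0 (⌈y - Q.t n 0⌉₊ + 1)]
    have h1 := Nat.le_ceil (y - Q.t n 0)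
    push_cast
    linarith
  have h0 : Nat.find hex ≠ 0 := by
    intro h
    have h2 := Nat.find_spec hex
    rw [h] at h2
    linarith
  obtain ⟨k, hk⟩ := Nat.exists_eq_succ_of_ne_zero h0
  refine ⟨k, ?_, ?_⟩
  · have h3 := Nat.find_min hex (m := k) (by omega)
    exact not_lt.1 h3
  · have h2 := Nat.find_spec hex
    rwa [hk] at h2

end QS43aux

set_option maxHeartbeats 1600000 in
/-- Proposition 4.3 (a): if a circle homeomorphism `h` distorts the ratios of lengths of
adjacent atoms of a fine grid by a bounded amount, then `h` is quasisymmetric. -/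
theorem fine_grid_quasisymmetric (Q : FineGrid) (H : ℝ → ℝ)
    (hH : IsCircleHomeoLift H) (C : ℝ) (hC : 0 < C)
    (hyp : ∀ n k,
      |(Q.t n (k + 1) - Q.t n k) / (Q.t n (k + 2) - Q.t n (k + 1)) -
        (H (Q.t n (k + 1)) - H (Q.t n k)) / (H (Q.t n (k + 2)) - H (Q.t n (k + 1)))| ≤ C ∧
      |(Q.t n (k + 2) - Q.t n (k + 1)) / (Q.t n (k + 1) - Q.t n k) -
        (H (Q.t n (k + 2)) - H (Q.t n (k + 1))) / (H (Q.t n (k + 1)) - H (Q.t n k))| ≤ C) :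
    QuasiSymmLift H := by
  classical
  obtain ⟨-, hm, hper⟩ := hH
  have ha2 : 2 ≤ Q.a := by
    obtain ⟨j, m, h2, ha, -, -⟩ := Q.subdiv 0 0
    omega
  have hNpos := Q.Npos 0
  set c' : ℝ := max Q.c Q.c⁻¹ with hc'def
  have hc'1 : 1 ≤ c' := by
    rcases le_total 1 Q.c with h | h
    · exact le_max_of_le_left h
    · refine le_max_of_le_right ?_
      rw [one_le_inv_iff₀]
      exact ⟨Q.cpos, h⟩
  have hc'0 : (0:ℝ) < c' := lt_of_lt_of_le one_pos hc'1
  have hlp : ∀ n k, 0 < Q.t n (k + 1) - Q.t n k :=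
    fun n k => sub_pos.2 (Q.mono n (Nat.lt_succ_self k))
  have hgp : ∀ n k, 0 < H (Q.t n (k + 1)) - H (Q.t n k) :=
    fun n k => sub_pos.2 (hm (Q.mono n (Nat.lt_succ_self k)))
  have hL1 : ∀ n k, Q.t n (k + 2) - Q.t n (k + 1) ≤ c' * (Q.t n (k + 1) - Q.t n k) := by
    intro n k
    have h := (Q.adj n k).2
    have h2 : Q.c ≤ c' := le_max_left _ _
    nlinarith [hlp n k]
  have hL2 : ∀ n k, Q.t n (k + 1) - Q.t n k ≤ c' * (Q.t n (k + 2) - Q.t n (k + 1)) := by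
    intro n k
    have h := (Q.adj n k).1
    have hc := Q.cpos
    have h3 : Q.t n (k + 1) - Q.t n k ≤ Q.c * (Q.t n (k + 2) - Q.t n (k + 1)) := by
      have h4 := mul_le_mul_of_nonneg_left h hc.le
      rw [← mul_assoc, mul_inv_cancel₀ (ne_of_gt hc), one_mul] at h4
      exact h4
    have h2 : Q.c ≤ c' := le_max_left _ _
    have h5 : 0 < Q.t n (k + 2) - Q.t n (k + 1) := hlp n (k + 1)
    nlinarith
  set K₀ : ℝ := c' + C with hK₀def
  have hK₀1 : (1:ℝ) ≤ K₀ := by rw [hK₀def]; linarith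
  have hK₀0 : (0:ℝ) < K₀ := lt_of_lt_of_le one_pos hK₀1
  have hH1 : ∀ n k, H (Q.t n (k + 2)) - H (Q.t n (k + 1)) ≤
      K₀ * (H (Q.t n (k + 1)) - H (Q.t n k)) := by
    intro n k
    have h := abs_le.1 (hyp n k).2
    have hr : (Q.t n (k + 2) - Q.t n (k + 1)) / (Q.t n (k + 1) - Q.t n k) ≤ c' := by
      rw [div_le_iff₀ (hlp n k)]
      have := hL1 n k
      linarith
    have h3 : (H (Q.t n (k + 2)) - H (Q.t n (k + 1))) /
        (H (Q.t n (k + 1)) - H (Q.t n k)) ≤ K₀ := by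
      rw [hK₀def]
      linarith [h.1]
    rw [div_le_iff₀ (hgp n k)] at h3
    linarith
  have hH2 : ∀ n k, H (Q.t n (k + 1)) - H (Q.t n k) ≤
      K₀ * (H (Q.t n (k + 2)) - H (Q.t n (k + 1))) := by
    intro n k
    have h := abs_le.1 (hyp n k).1
    have hp2 : 0 < Q.t n (k + 2) - Q.t n (k + 1) := hlp n (k + 1)
    have hg2 : 0 < H (Q.t n (k + 2)) - H (Q.t n (k + 1)) := hgp n (k + 1)
    have hr : (Q.t n (k + 1) - Q.t n k) / (Q.t n (k + 2) - Q.t n (k + 1)) ≤ c' := by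
      rw [div_le_iff₀ hp2]
      have := hL2 n k
      linarith
    have h3 : (H (Q.t n (k + 1)) - H (Q.t n k)) /
        (H (Q.t n (k + 2)) - H (Q.t n (k + 1))) ≤ K₀ := by
      rw [hK₀def]
      linarith [h.1]
    rw [div_le_iff₀ hg2] at h3
    linarith
  have hLwin : ∀ n p q w, p ≤ q + w → q ≤ p + w →
      Q.t n (p + 1) - Q.t n p ≤ c' ^ w * (Q.t n (q + 1) - Q.t n q) := by
    intro n p q w h h'
    exact QS43aux.chain_window (f := fun i => Q.t n (i + 1) - Q.t n i) (c := c')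
      hc'1 (fun i => hlp n i) (fun i => hL1 n i) (fun i => hL2 n i) p q w h h'
  have hGwin : ∀ n p q w, p ≤ q + w → q ≤ p + w →
      H (Q.t n (p + 1)) - H (Q.t n p) ≤ K₀ ^ w * (H (Q.t n (q + 1)) - H (Q.t n q)) := by
    intro n p q w h h'
    exact QS43aux.chain_window (f := fun i => H (Q.t n (i + 1)) - H (Q.t n i)) (c := K₀)
      hK₀1 (fun i => hgp n i) (fun i => hH1 n i) (fun i => hH2 n i) p q w h h'
  set M : ℕ := max (2 * Q.N 0) (2 * Q.a) with hMdef
  have hMN : 2 * Q.N 0 ≤ M := le_max_left _ _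
  have hMa : 2 * Q.a ≤ M := le_max_right _ _
  have hM1 : 1 ≤ M := by omega
  have hMR : (1:ℝ) ≤ (M:ℝ) := by exact_mod_cast hM1
  have hcover : ∀ n kb cnt q, kb ≤ q → q ≤ kb + cnt → cnt ≤ M →
      H (Q.t n (kb + cnt)) - H (Q.t n kb) ≤
        (M:ℝ) * K₀ ^ M * (H (Q.t n (q + 1)) - H (Q.t n q)) := by
    intro n kb cnt q hq1 hq2 hq3
    have hsum : H (Q.t n (kb + cnt)) - H (Q.t n kb)
        = ∑ i ∈ Finset.range cnt, (H (Q.t n (kb + i + 1)) - H (Q.t n (kb + i))) :=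
      (Finset.sum_range_sub (fun i => H (Q.t n (kb + i))) cnt).symm
    rw [hsum]
    have hb : ∀ i ∈ Finset.range cnt,
        H (Q.t n (kb + i + 1)) - H (Q.t n (kb + i)) ≤
          K₀ ^ M * (H (Q.t n (q + 1)) - H (Q.t n q)) := by
      intro i hi
      rw [Finset.mem_range] at hi
      exact hGwin n (kb + i) q M (by omega) (by omega)
    have hcard := Finset.sum_le_card_nsmul _ _ _ hb
    rw [Finset.card_range] at hcard
    have hb0 : (0:ℝ) ≤ K₀ ^ M * (H (Q.t n (q + 1)) - H (Q.t n q)) :=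
      mul_nonneg (pow_nonneg hK₀0.le M) (hgp n q).le
    calc (∑ i ∈ Finset.range cnt, (H (Q.t n (kb + i + 1)) - H (Q.t n (kb + i))))
        ≤ (cnt:ℝ) * (K₀ ^ M * (H (Q.t n (q + 1)) - H (Q.t n q))) := by
          simpa [nsmul_eq_mul] using hcard
      _ ≤ (M:ℝ) * (K₀ ^ M * (H (Q.t n (q + 1)) - H (Q.t n q))) :=
          mul_le_mul_of_nonneg_right (by exact_mod_cast hq3) hb0
      _ = (M:ℝ) * K₀ ^ M * (H (Q.t n (q + 1)) - H (Q.t n q)) := by ring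
  set θ : ℝ := c' / (1 + c') with hθdef
  have hθ0 : 0 ≤ θ := by rw [hθdef]; positivity
  have hθ1 : θ < 1 := by
    rw [hθdef, div_lt_one (by linarith)]
    linarith
  set μ : ℝ := (Q.a : ℝ) * c' ^ Q.a with hμdef
  have hμ0 : 0 < μ := by
    rw [hμdef]
    exact mul_pos (by exact_mod_cast Q.apos) (pow_pos hc'0 _)
  set μH : ℝ := (Q.a : ℝ) * K₀ ^ Q.a with hμHdef
  have haR : (1:ℝ) ≤ (Q.a:ℝ) := by exact_mod_cast Q.apos
  have hKa1 : (1:ℝ) ≤ K₀ ^ Q.a := by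
    have := pow_le_pow_right₀ hK₀1 (Nat.zero_le Q.a)
    simpa using this
  have hμH1 : 1 ≤ μH := by
    rw [hμHdef]
    nlinarith
  have hμH0 : (0:ℝ) ≤ μH := by linarith
  set α : ℝ := min (2 / ((M:ℝ) * c' ^ M)) (((1 + c') * μ)⁻¹) with hαdef
  have hPM : (0:ℝ) < (M:ℝ) * c' ^ M :=
    mul_pos (lt_of_lt_of_le one_pos hMR) (pow_pos hc'0 M)
  have hα0 : 0 < α := by
    rw [hαdef]
    exact lt_min (div_pos two_pos hPM) (inv_pos.2 (mul_pos (by linarith) hμ0))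
  obtain ⟨B, hBpow⟩ := exists_pow_lt_of_lt_one (div_pos hα0 hc'0) hθ1
  have hB : θ ^ B * c' < α := (lt_div_iff₀ hc'0).1 hBpow
  have hKM1 : (1:ℝ) ≤ K₀ ^ M := by
    have := pow_le_pow_right₀ hK₀1 (Nat.zero_le M)
    simpa using this
  have hμHB1 : (1:ℝ) ≤ μH ^ B := by
    have := pow_le_pow_right₀ hμH1 (Nat.zero_le B)
    simpa using this
  have one_le_mul' : ∀ p q : ℝ, 1 ≤ p → 1 ≤ q → 1 ≤ p * q := by
    intro p q hp hq
    nlinarith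
  set K : ℝ := (M:ℝ) * K₀ ^ M * μH ^ B * K₀ with hKdef
  have hK1 : 1 ≤ K := by
    rw [hKdef]
    exact one_le_mul' _ _ (one_le_mul' _ _ (one_le_mul' _ _ hMR hKM1) hμHB1) hK₀1
  have hK0 : 0 < K := lt_of_lt_of_le one_pos hK1
  have hMK0 : (0:ℝ) ≤ (M:ℝ) * K₀ ^ M :=
    mul_nonneg (Nat.cast_nonneg M) (pow_nonneg hK₀0.le M)
  have hMKB0 : (0:ℝ) ≤ (M:ℝ) * K₀ ^ M * μH ^ B :=
    mul_nonneg hMK0 (pow_nonneg hμH0 B)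
  refine ⟨K, hK1, ?_⟩
  have key : ∀ x : ℝ, Q.t 0 0 + 1 ≤ x → ∀ d : ℝ, 0 < d → 2 * d ≤ 1 →
      K⁻¹ ≤ (H (x + d) - H x) / (H x - H (x - d)) ∧
      (H (x + d) - H x) / (H x - H (x - d)) ≤ K := by
    intro x hx d hd hd2
    have hT : ∀ n, Q.t n 0 ≤ x := fun n => le_trans (QS43aux.t_zero_le Q n) (by linarith)
    choose k hk1 hk2 using fun n => QS43aux.exists_idx Q n x (hT n)
    have hkN : ∀ n, Q.N n ≤ k n := by
      intro n
      have h1 : Q.t n (Q.N n) = Q.t n 0 + 1 := by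
        have := QS43aux.t_add_period Q n 0 1
        simpa using this
      have h2 : Q.t n (Q.N n) ≤ x := by
        rw [h1]
        have := QS43aux.t_zero_le Q n
        linarith
      have h3 : Q.t n (Q.N n) < Q.t n (k n + 1) := lt_of_le_of_lt h2 (hk2 n)
      have h4 := (Q.mono n).lt_iff_lt.1 h3
      omega
    have hk1' : ∀ n, 1 ≤ k n := fun n => le_trans (Q.Npos n) (hkN n)
    have hℓp : ∀ n, 0 < Q.t n (k n + 1) - Q.t n (k n) := fun n => hlp n (k n)
    have hGp : ∀ n, 0 < H (Q.t n (k n + 1)) - H (Q.t n (k n)) := fun n => hgp n (k n)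
    have subd : ∀ n, ∃ j m, 2 ≤ m ∧ m ≤ Q.a ∧ Q.t (n + 1) j = Q.t n (k n) ∧
        Q.t (n + 1) (j + m) = Q.t n (k n + 1) ∧ j ≤ k (n + 1) ∧ k (n + 1) < j + m := by
      intro n
      obtain ⟨j, m, h2, ha, hja, hjb⟩ := Q.subdiv n (k n)
      refine ⟨j, m, h2, ha, hja, hjb, ?_, ?_⟩
      · by_contra hcon
        push_neg at hcon
        have h3 : Q.t (n + 1) (k (n + 1) + 1) ≤ Q.t (n + 1) j :=
          (Q.mono (n + 1)).monotone (by omega)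
        rw [hja] at h3
        have h4 := hk2 (n + 1)
        have h5 := hk1 n
        linarith
      · by_contra hcon
        push_neg at hcon
        have h3 : Q.t (n + 1) (j + m) ≤ Q.t (n + 1) (k (n + 1)) :=
          (Q.mono (n + 1)).monotone hcon
        rw [hjb] at h3
        have h4 := hk1 (n + 1)
        have h5 := hk2 n
        linarith
    have hF1 : ∀ n, Q.t (n + 1) (k (n + 1) + 1) - Q.t (n + 1) (k (n + 1)) ≤
        θ * (Q.t n (k n + 1) - Q.t n (k n)) := by
      intro n
      obtain ⟨j, m, h2m, hma, hja, hjb, hjk, hkjm⟩ := subd n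
      have hstep : (Q.t (n + 1) (k (n + 1) + 1) - Q.t (n + 1) (k (n + 1))) * (1 + c') ≤
          (Q.t n (k n + 1) - Q.t n (k n)) * c' := by
        rcases eq_or_lt_of_le (show k (n + 1) + 1 ≤ j + m by omega) with heq | hlt
        · obtain ⟨k', hk'⟩ : ∃ k', k (n + 1) = k' + 1 := ⟨k (n + 1) - 1, by omega⟩
          rw [hk']
          have hs' : Q.t (n + 1) (k' + 1 + 1) - Q.t (n + 1) (k' + 1) ≤
              c' * (Q.t (n + 1) (k' + 1) - Q.t (n + 1) k') := hL1 (n + 1) k'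
          have hlow : Q.t n (k n) ≤ Q.t (n + 1) k' := by
            rw [← hja]
            exact (Q.mono (n + 1)).monotone (by omega)
          have hhigh : Q.t (n + 1) (k' + 1 + 1) = Q.t n (k n + 1) := by
            rw [← hjb]
            congr 1
            omega
          have h7 : (Q.t (n + 1) (k' + 1 + 1) - Q.t (n + 1) (k' + 1)) +
              (Q.t (n + 1) (k' + 1) - Q.t (n + 1) k') ≤ Q.t n (k n + 1) - Q.t n (k n) := by
            rw [hhigh] at *
            linarith
          have h8 := mul_le_mul_of_nonneg_right h7 hc'0.le
          linarith [hs', h8]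
        · have hs' : Q.t (n + 1) (k (n + 1) + 1) - Q.t (n + 1) (k (n + 1)) ≤
              c' * (Q.t (n + 1) (k (n + 1) + 2) - Q.t (n + 1) (k (n + 1) + 1)) :=
            hL2 (n + 1) (k (n + 1))
          have hlow : Q.t n (k n) ≤ Q.t (n + 1) (k (n + 1)) := by
            rw [← hja]
            exact (Q.mono (n + 1)).monotone hjk
          have hhigh : Q.t (n + 1) (k (n + 1) + 2) ≤ Q.t n (k n + 1) := by
            rw [← hjb]
            exact (Q.mono (n + 1)).monotone (by omega)
          have h7 : (Q.t (n + 1) (k (n + 1) + 1) - Q.t (n + 1) (k (n + 1))) +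
              (Q.t (n + 1) (k (n + 1) + 2) - Q.t (n + 1) (k (n + 1) + 1)) ≤
              Q.t n (k n + 1) - Q.t n (k n) := by linarith
          have h8 := mul_le_mul_of_nonneg_right h7 hc'0.le
          linarith [hs', h8]
      rw [hθdef, div_mul_eq_mul_div, le_div_iff₀ (show (0:ℝ) < 1 + c' by linarith)]
      linarith [hstep]
    have hF2 : ∀ n, Q.t n (k n + 1) - Q.t n (k n) ≤
        μ * (Q.t (n + 1) (k (n + 1) + 1) - Q.t (n + 1) (k (n + 1))) := by
      intro n
      obtain ⟨j, m, h2m, hma, hja, hjb, hjk, hkjm⟩ := subd n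
      have hsum : Q.t (n + 1) (j + m) - Q.t (n + 1) j
          = ∑ i ∈ Finset.range m, (Q.t (n + 1) (j + i + 1) - Q.t (n + 1) (j + i)) :=
        (Finset.sum_range_sub (fun i => Q.t (n + 1) (j + i)) m).symm
      rw [hja, hjb] at hsum
      have hb : ∀ i ∈ Finset.range m, Q.t (n + 1) (j + i + 1) - Q.t (n + 1) (j + i) ≤
          c' ^ Q.a * (Q.t (n + 1) (k (n + 1) + 1) - Q.t (n + 1) (k (n + 1))) := by
        intro i hi
        rw [Finset.mem_range] at hi
        exact hLwin (n + 1) (j + i) (k (n + 1)) Q.a (by omega) (by omega)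
      have hcard := Finset.sum_le_card_nsmul _ _ _ hb
      rw [Finset.card_range] at hcard
      have hnn : (0:ℝ) ≤ c' ^ Q.a * (Q.t (n + 1) (k (n + 1) + 1) - Q.t (n + 1) (k (n + 1))) :=
        mul_nonneg (pow_nonneg hc'0.le _) (hℓp (n + 1)).le
      have hma' : (m:ℝ) ≤ (Q.a:ℝ) := by exact_mod_cast hma
      rw [hμdef, hsum]
      calc (∑ i ∈ Finset.range m, (Q.t (n + 1) (j + i + 1) - Q.t (n + 1) (j + i)))
          ≤ (m:ℝ) * (c' ^ Q.a * (Q.t (n + 1) (k (n + 1) + 1) - Q.t (n + 1) (k (n + 1)))) := by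
            simpa [nsmul_eq_mul] using hcard
        _ ≤ (Q.a:ℝ) * (c' ^ Q.a * (Q.t (n + 1) (k (n + 1) + 1) - Q.t (n + 1) (k (n + 1)))) :=
            mul_le_mul_of_nonneg_right hma' hnn
        _ = (Q.a:ℝ) * c' ^ Q.a * (Q.t (n + 1) (k (n + 1) + 1) - Q.t (n + 1) (k (n + 1))) := by
            ring
    have hF5 : ∀ n, H (Q.t n (k n + 1)) - H (Q.t n (k n)) ≤
        μH * (H (Q.t (n + 1) (k (n + 1) + 1)) - H (Q.t (n + 1) (k (n + 1)))) := by
      intro n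
      obtain ⟨j, m, h2m, hma, hja, hjb, hjk, hkjm⟩ := subd n
      have hsum : H (Q.t (n + 1) (j + m)) - H (Q.t (n + 1) j)
          = ∑ i ∈ Finset.range m, (H (Q.t (n + 1) (j + i + 1)) - H (Q.t (n + 1) (j + i))) :=
        (Finset.sum_range_sub (fun i => H (Q.t (n + 1) (j + i))) m).symm
      rw [hja, hjb] at hsum
      have hb : ∀ i ∈ Finset.range m, H (Q.t (n + 1) (j + i + 1)) - H (Q.t (n + 1) (j + i)) ≤
          K₀ ^ Q.a * (H (Q.t (n + 1) (k (n + 1) + 1)) - H (Q.t (n + 1) (k (n + 1)))) := by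
        intro i hi
        rw [Finset.mem_range] at hi
        exact hGwin (n + 1) (j + i) (k (n + 1)) Q.a (by omega) (by omega)
      have hcard := Finset.sum_le_card_nsmul _ _ _ hb
      rw [Finset.card_range] at hcard
      have hnn : (0:ℝ) ≤ K₀ ^ Q.a *
          (H (Q.t (n + 1) (k (n + 1) + 1)) - H (Q.t (n + 1) (k (n + 1)))) :=
        mul_nonneg (pow_nonneg hK₀0.le _) (hGp (n + 1)).le
      have hma' : (m:ℝ) ≤ (Q.a:ℝ) := by exact_mod_cast hma
      rw [hμHdef, hsum]
      calc (∑ i ∈ Finset.range m, (H (Q.t (n + 1) (j + i + 1)) - H (Q.t (n + 1) (j + i))))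
          ≤ (m:ℝ) * (K₀ ^ Q.a * (H (Q.t (n + 1) (k (n + 1) + 1)) - H (Q.t (n + 1) (k (n + 1))))) := by
            simpa [nsmul_eq_mul] using hcard
        _ ≤ (Q.a:ℝ) * (K₀ ^ Q.a * (H (Q.t (n + 1) (k (n + 1) + 1)) - H (Q.t (n + 1) (k (n + 1))))) :=
            mul_le_mul_of_nonneg_right hma' hnn
        _ = (Q.a:ℝ) * K₀ ^ Q.a * (H (Q.t (n + 1) (k (n + 1) + 1)) - H (Q.t (n + 1) (k (n + 1)))) := by
            ring
    have hGdec : ∀ n, H (Q.t (n + 1) (k (n + 1) + 1)) - H (Q.t (n + 1) (k (n + 1))) ≤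
        H (Q.t n (k n + 1)) - H (Q.t n (k n)) := by
      intro n
      obtain ⟨j, m, h2m, hma, hja, hjb, hjk, hkjm⟩ := subd n
      have h1 : Q.t n (k n) ≤ Q.t (n + 1) (k (n + 1)) := by
        rw [← hja]
        exact (Q.mono (n + 1)).monotone hjk
      have h2 : Q.t (n + 1) (k (n + 1) + 1) ≤ Q.t n (k n + 1) := by
        rw [← hjb]
        exact (Q.mono (n + 1)).monotone (by omega)
      have h3 := hm.monotone h1
      have h4 := hm.monotone h2
      linarith
    have hθit : ∀ n j, Q.t (n + j) (k (n + j) + 1) - Q.t (n + j) (k (n + j)) ≤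
        θ ^ j * (Q.t n (k n + 1) - Q.t n (k n)) :=
      QS43aux.chain_up (f := fun n => Q.t n (k n + 1) - Q.t n (k n)) hθ0 hF1
    have hGit : ∀ n j, H (Q.t n (k n + 1)) - H (Q.t n (k n)) ≤
        μH ^ j * (H (Q.t (n + j) (k (n + j) + 1)) - H (Q.t (n + j) (k (n + j)))) :=
      QS43aux.chain_down (f := fun n => H (Q.t n (k n + 1)) - H (Q.t n (k n))) hμH0 hF5
    have hGdecit : ∀ n j, H (Q.t (n + j) (k (n + j) + 1)) - H (Q.t (n + j) (k (n + j))) ≤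
        H (Q.t n (k n + 1)) - H (Q.t n (k n)) := by
      intro n j
      induction j with
      | zero => exact le_refl _
      | succ j ih => exact le_trans (hGdec (n + j)) ih
    have hex0 : ∃ n₀ : ℕ, (1 + c') * (θ ^ n₀ * (Q.t 0 (k 0 + 1) - Q.t 0 (k 0))) < d := by
      obtain ⟨n₀, h⟩ := exists_pow_lt_of_lt_one
        (div_pos hd (mul_pos (show (0:ℝ) < 1 + c' by linarith) (hℓp 0))) hθ1
      refine ⟨n₀, ?_⟩
      rw [lt_div_iff₀ (mul_pos (show (0:ℝ) < 1 + c' by linarith) (hℓp 0))] at h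
      linarith [h]
    have hexR : ∃ n, Q.t n (k n + 2) ≤ x + d := by
      obtain ⟨n₀, h⟩ := hex0
      refine ⟨n₀, ?_⟩
      have h1 : Q.t n₀ (k n₀ + 1) - Q.t n₀ (k n₀) ≤
          θ ^ n₀ * (Q.t 0 (k 0 + 1) - Q.t 0 (k 0)) := by
        have h2 := hθit 0 n₀
        simpa using h2
      have h3 : Q.t n₀ (k n₀ + 2) - Q.t n₀ (k n₀ + 1) ≤
          c' * (Q.t n₀ (k n₀ + 1) - Q.t n₀ (k n₀)) := hL1 n₀ (k n₀)
      have h4 := hk1 n₀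
      have h5 := mul_le_mul_of_nonneg_left h1 (show (0:ℝ) ≤ 1 + c' by linarith)
      nlinarith [hℓp n₀, hc'0]
    have hexL : ∃ n, x - d ≤ Q.t n (k n - 1) := by
      obtain ⟨n₀, h⟩ := hex0
      refine ⟨n₀, ?_⟩
      have hkk := hk1' n₀
      have h1 : Q.t n₀ (k n₀ + 1) - Q.t n₀ (k n₀) ≤
          θ ^ n₀ * (Q.t 0 (k 0 + 1) - Q.t 0 (k 0)) := by
        have h2 := hθit 0 n₀
        simpa using h2
      have hLm : Q.t n₀ (k n₀) - Q.t n₀ (k n₀ - 1) ≤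
          c' * (Q.t n₀ (k n₀ + 1) - Q.t n₀ (k n₀)) := by
        have h3 := hL2 n₀ (k n₀ - 1)
        have e1 : k n₀ - 1 + 1 = k n₀ := by omega
        have e2 : k n₀ - 1 + 2 = k n₀ + 1 := by omega
        rw [e1, e2] at h3
        exact h3
      have h4 := hk2 n₀
      have h5 := mul_le_mul_of_nonneg_left h1 (show (0:ℝ) ≤ 1 + c' by linarith)
      linarith [hℓp n₀]
    set nR := Nat.find hexR with hnRdef
    have hnRs : Q.t nR (k nR + 2) ≤ x + d := Nat.find_spec hexR
    have hnRm : ∀ m', m' < nR → x + d < Q.t m' (k m' + 2) :=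
      fun m' h => not_le.1 (Nat.find_min hexR h)
    set nL := Nat.find hexL with hnLdef
    have hnLs : x - d ≤ Q.t nL (k nL - 1) := Nat.find_spec hexL
    have hnLm : ∀ m', m' < nL → Q.t m' (k m' - 1) < x - d :=
      fun m' h => not_le.1 (Nat.find_min hexL h)
    have hRpos : 0 < H (x + d) - H x := sub_pos.2 (hm (by linarith))
    have hLpos : 0 < H x - H (x - d) := sub_pos.2 (hm (by linarith))
    have hRlow : H (Q.t nR (k nR + 1)) - H (Q.t nR (k nR)) ≤ K₀ * (H (x + d) - H x) := by
      have h1 : H (Q.t nR (k nR + 2)) ≤ H (x + d) := hm.monotone hnRs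
      have h2 : H x ≤ H (Q.t nR (k nR + 1)) := hm.monotone (hk2 nR).le
      have h3 := hH2 nR (k nR)
      have h4 : H (Q.t nR (k nR + 2)) - H (Q.t nR (k nR + 1)) ≤ H (x + d) - H x := by
        linarith
      have h5 := mul_le_mul_of_nonneg_left h4 hK₀0.le
      linarith
    have hLlow : H (Q.t nL (k nL + 1)) - H (Q.t nL (k nL)) ≤ K₀ * (H x - H (x - d)) := by
      have e1 : k nL - 1 + 1 = k nL := by have := hk1' nL; omega
      have e2 : k nL - 1 + 2 = k nL + 1 := by have := hk1' nL; omega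
      have h3 := hH1 nL (k nL - 1)
      rw [e1, e2] at h3
      have h1 : H (x - d) ≤ H (Q.t nL (k nL - 1)) := hm.monotone hnLs
      have h2 : H (Q.t nL (k nL)) ≤ H x := hm.monotone (hk1 nL)
      have h4 : H (Q.t nL (k nL)) - H (Q.t nL (k nL - 1)) ≤ H x - H (x - d) := by linarith
      have h5 := mul_le_mul_of_nonneg_left h4 hK₀0.le
      linarith
    have hRup : H (x + d) - H x ≤
        (M:ℝ) * K₀ ^ M * (H (Q.t nR (k nR + 1)) - H (Q.t nR (k nR))) := by
      rcases Nat.eq_zero_or_pos nR with h0 | hpos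
      · have e1 : Q.t 0 (k 0 + 2 * Q.N 0) = Q.t 0 (k 0) + 2 := by
          have := QS43aux.t_add_period Q 0 (k 0) 2
          push_cast at this
          linarith [this]
        have h2 : Q.t 0 (k 0 + 1) ≤ Q.t 0 (k 0 + Q.N 0) :=
          (Q.mono 0).monotone (by omega)
        have h3 : Q.t 0 (k 0 + Q.N 0) = Q.t 0 (k 0) + 1 := by
          have := QS43aux.t_add_period Q 0 (k 0) 1
          simpa using this
        have h4 := hk2 0
        have hcov : x + d ≤ Q.t 0 (k 0 + 2 * Q.N 0) := by
          rw [e1]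
          linarith
        have hc2 := hcover 0 (k 0) (2 * Q.N 0) (k 0) (le_refl _) (by omega) hMN
        have h5 : H (x + d) ≤ H (Q.t 0 (k 0 + 2 * Q.N 0)) := hm.monotone hcov
        have h6 : H (Q.t 0 (k 0)) ≤ H x := hm.monotone (hk1 0)
        rw [h0]
        linarith
      · obtain ⟨nn, hnn⟩ := Nat.exists_eq_succ_of_ne_zero (Nat.pos_iff_ne_zero.1 hpos)
        have hfail : x + d < Q.t nn (k nn + 2) := hnRm nn (by omega)
        obtain ⟨j, m₁, h2m₁, hm₁a, hja, hjb, hjk, hkjm⟩ := subd nn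
        obtain ⟨j₂, m₂, h2m₂, hm₂a, hj₂a, hj₂b⟩ := Q.subdiv nn (k nn + 1)
        have hj₂ : j₂ = j + m₁ := by
          apply (Q.mono (nn + 1)).injective
          rw [hj₂a, hjb]
        have hend : Q.t (nn + 1) (j + m₁ + m₂) = Q.t nn (k nn + 2) := by
          rw [← hj₂]
          exact hj₂b
        have hcnt : k (nn + 1) + (j + m₁ + m₂ - k (nn + 1)) = j + m₁ + m₂ := by omega
        have hc2 := hcover (nn + 1) (k (nn + 1)) (j + m₁ + m₂ - k (nn + 1)) (k (nn + 1))
          (le_refl _) (by omega) (by omega)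
        rw [hcnt, hend] at hc2
        have h5 : H (x + d) ≤ H (Q.t nn (k nn + 2)) := hm.monotone hfail.le
        have h6 : H (Q.t (nn + 1) (k (nn + 1))) ≤ H x := hm.monotone (hk1 (nn + 1))
        rw [hnn]
        linarith
    have hLup : H x - H (x - d) ≤
        (M:ℝ) * K₀ ^ M * (H (Q.t nL (k nL + 1)) - H (Q.t nL (k nL))) := by
      rcases Nat.eq_zero_or_pos nL with h0 | hpos
      · have hkN0 := hkN 0
        have hkb : k 0 - Q.N 0 + Q.N 0 = k 0 := by omega
        have e1 : Q.t 0 (k 0 - Q.N 0 + Q.N 0) = Q.t 0 (k 0 - Q.N 0) + 1 := by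
          have := QS43aux.t_add_period Q 0 (k 0 - Q.N 0) 1
          simpa using this
        have e2 : Q.t 0 (k 0 - Q.N 0) = Q.t 0 (k 0) - 1 := by
          rw [hkb] at e1
          linarith
        have hlow : Q.t 0 (k 0 - Q.N 0) ≤ x - d := by
          have := hk1 0
          linarith
        have hc2 := hcover 0 (k 0 - Q.N 0) (Q.N 0 + 1) (k 0) (by omega) (by omega) (by omega)
        have e3 : k 0 - Q.N 0 + (Q.N 0 + 1) = k 0 + 1 := by omega
        rw [e3] at hc2
        have h5 : H x ≤ H (Q.t 0 (k 0 + 1)) := hm.monotone (hk2 0).le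
        have h6 : H (Q.t 0 (k 0 - Q.N 0)) ≤ H (x - d) := hm.monotone hlow
        rw [h0]
        linarith
      · obtain ⟨nn, hnn⟩ := Nat.exists_eq_succ_of_ne_zero (Nat.pos_iff_ne_zero.1 hpos)
        have hfail : Q.t nn (k nn - 1) < x - d := hnLm nn (by omega)
        obtain ⟨j₁, m₁, h2m₁, hm₁a, hj₁a, hj₁b⟩ := Q.subdiv nn (k nn - 1)
        obtain ⟨j, m, h2m, hma, hja, hjb, hjk, hkjm⟩ := subd nn
        have e0 : k nn - 1 + 1 = k nn := by have := hk1' nn; omega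
        rw [e0] at hj₁b
        have hj₁ : j = j₁ + m₁ := by
          apply (Q.mono (nn + 1)).injective
          rw [hja, hj₁b]
        have hc2 := hcover (nn + 1) j₁ (k (nn + 1) + 1 - j₁) (k (nn + 1))
          (by omega) (by omega) (by omega)
        have e4 : j₁ + (k (nn + 1) + 1 - j₁) = k (nn + 1) + 1 := by omega
        rw [e4] at hc2
        have h5 : H x ≤ H (Q.t (nn + 1) (k (nn + 1) + 1)) := hm.monotone (hk2 (nn + 1)).le
        have h6 : H (Q.t (nn + 1) j₁) ≤ H (x - d) := by
          have h7 : Q.t (nn + 1) j₁ ≤ x - d := by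
            rw [hj₁a]
            exact hfail.le
          exact hm.monotone h7
        rw [hnn]
        linarith
    have hWRu : Q.t nR (k nR + 1) - Q.t nR (k nR) ≤ c' * d := by
      have h1 : Q.t nR (k nR + 2) - Q.t nR (k nR + 1) ≤ d := by
        have := hk2 nR
        linarith [hnRs]
      have h2 := hL2 nR (k nR)
      have h3 := mul_le_mul_of_nonneg_left h1 hc'0.le
      linarith
    have hWLu : Q.t nL (k nL + 1) - Q.t nL (k nL) ≤ c' * d := by
      have e1 : k nL - 1 + 1 = k nL := by have := hk1' nL; omega
      have e2 : k nL - 1 + 2 = k nL + 1 := by have := hk1' nL; omega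
      have h1 : Q.t nL (k nL) - Q.t nL (k nL - 1) ≤ d := by
        have := hk1 nL
        linarith [hnLs]
      have h2 := hL1 nL (k nL - 1)
      rw [e1, e2] at h2
      have h3 := mul_le_mul_of_nonneg_left h1 hc'0.le
      linarith
    have hℓ0 : α * d ≤ Q.t 0 (k 0 + 1) - Q.t 0 (k 0) := by
      have h3 : Q.t 0 (k 0 + Q.N 0) = Q.t 0 (k 0) + 1 := by
        have := QS43aux.t_add_period Q 0 (k 0) 1
        simpa using this
      have hsum : Q.t 0 (k 0 + Q.N 0) - Q.t 0 (k 0)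
          = ∑ i ∈ Finset.range (Q.N 0), (Q.t 0 (k 0 + i + 1) - Q.t 0 (k 0 + i)) :=
        (Finset.sum_range_sub (fun i => Q.t 0 (k 0 + i)) (Q.N 0)).symm
      have hb : ∀ i ∈ Finset.range (Q.N 0), Q.t 0 (k 0 + i + 1) - Q.t 0 (k 0 + i) ≤
          c' ^ M * (Q.t 0 (k 0 + 1) - Q.t 0 (k 0)) := by
        intro i hi
        rw [Finset.mem_range] at hi
        exact hLwin 0 (k 0 + i) (k 0) M (by omega) (by omega)
      have hcard := Finset.sum_le_card_nsmul _ _ _ hb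
      rw [Finset.card_range] at hcard
      have h4 : (1:ℝ) ≤ (Q.N 0 : ℝ) * (c' ^ M * (Q.t 0 (k 0 + 1) - Q.t 0 (k 0))) := by
        have h5 : (1:ℝ) = Q.t 0 (k 0 + Q.N 0) - Q.t 0 (k 0) := by
          rw [h3]
          ring
        rw [h5, hsum]
        simpa [nsmul_eq_mul] using hcard
      have hN2 : (Q.N 0 : ℝ) ≤ (M:ℝ) := by exact_mod_cast (by omega : Q.N 0 ≤ M)
      have h7 : (Q.N 0:ℝ) * (c' ^ M * (Q.t 0 (k 0 + 1) - Q.t 0 (k 0))) ≤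
          (M:ℝ) * (c' ^ M * (Q.t 0 (k 0 + 1) - Q.t 0 (k 0))) :=
        mul_le_mul_of_nonneg_right hN2 (mul_nonneg (pow_nonneg hc'0.le M) (hℓp 0).le)
      have h6 : (1:ℝ) ≤ (M:ℝ) * (c' ^ M * (Q.t 0 (k 0 + 1) - Q.t 0 (k 0))) := by
        linarith [h4, h7]
      rw [← mul_assoc] at h6
      have hα2 : α ≤ 2 / ((M:ℝ) * c' ^ M) := by
        rw [hαdef]
        exact min_le_left _ _
      have h8 : α * d ≤ (2 / ((M:ℝ) * c' ^ M)) * d := mul_le_mul_of_nonneg_right hα2 hd.le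
      have h9 : (2 / ((M:ℝ) * c' ^ M)) * d ≤ (2 / ((M:ℝ) * c' ^ M)) * (1 / 2) :=
        mul_le_mul_of_nonneg_left (by linarith) (by positivity)
      have h10 : (2 / ((M:ℝ) * c' ^ M)) * (1 / 2) = 1 / ((M:ℝ) * c' ^ M) := by ring
      have h11 : 1 / ((M:ℝ) * c' ^ M) ≤ Q.t 0 (k 0 + 1) - Q.t 0 (k 0) := by
        rw [div_le_iff₀ hPM]
        linarith [h6]
      linarith
    have hαlow : ∀ nn n', n' = nn + 1 →
        d < (1 + c') * (Q.t nn (k nn + 1) - Q.t nn (k nn)) →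
        α * d ≤ Q.t n' (k n' + 1) - Q.t n' (k n') := by
      intro nn n' hnn h3
      have h4 := hF2 nn
      rw [← hnn] at h4
      have hα3 : α ≤ ((1 + c') * μ)⁻¹ := by
        rw [hαdef]
        exact min_le_right _ _
      have hPos : (0:ℝ) < (1 + c') * μ := mul_pos (by linarith) hμ0
      have h6 := mul_le_mul_of_nonneg_left h4 (show (0:ℝ) ≤ 1 + c' by linarith)
      have h5 : d ≤ (1 + c') * μ * (Q.t n' (k n' + 1) - Q.t n' (k n')) := by
        linarith [h3, h6]
      have h7 : α * d ≤ ((1 + c') * μ)⁻¹ * d := mul_le_mul_of_nonneg_right hα3 hd.le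
      have h8 : d / ((1 + c') * μ) ≤ Q.t n' (k n' + 1) - Q.t n' (k n') := by
        rw [div_le_iff₀ hPos]
        linarith [h5]
      rw [div_eq_inv_mul] at h8
      linarith [h7, h8]
    have hWRl : α * d ≤ Q.t nR (k nR + 1) - Q.t nR (k nR) := by
      rcases Nat.eq_zero_or_pos nR with h0 | hpos
      · rw [h0]
        exact hℓ0
      · obtain ⟨nn, hnn⟩ := Nat.exists_eq_succ_of_ne_zero (Nat.pos_iff_ne_zero.1 hpos)
        have hfail : x + d < Q.t nn (k nn + 2) := hnRm nn (by omega)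
        have h1 := hL1 nn (k nn)
        have h2 := hk1 nn
        have h3 : d < (1 + c') * (Q.t nn (k nn + 1) - Q.t nn (k nn)) := by linarith
        exact hαlow nn nR hnn h3
    have hWLl : α * d ≤ Q.t nL (k nL + 1) - Q.t nL (k nL) := by
      rcases Nat.eq_zero_or_pos nL with h0 | hpos
      · rw [h0]
        exact hℓ0
      · obtain ⟨nn, hnn⟩ := Nat.exists_eq_succ_of_ne_zero (Nat.pos_iff_ne_zero.1 hpos)
        have hfail : Q.t nn (k nn - 1) < x - d := hnLm nn (by omega)
        have e1 : k nn - 1 + 1 = k nn := by have := hk1' nn; omega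
        have e2 : k nn - 1 + 2 = k nn + 1 := by have := hk1' nn; omega
        have h1 := hL2 nn (k nn - 1)
        rw [e1, e2] at h1
        have h2 := hk2 nn
        have h3 : d < (1 + c') * (Q.t nn (k nn + 1) - Q.t nn (k nn)) := by linarith
        exact hαlow nn nL hnn h3
    have hgap : ∀ n1 n2 : ℕ, α * d ≤ Q.t n1 (k n1 + 1) - Q.t n1 (k n1) →
        Q.t n2 (k n2 + 1) - Q.t n2 (k n2) ≤ c' * d → n1 ≤ n2 + B := by
      intro n1 n2 ha hb2
      by_contra hcon
      push_neg at hcon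
      have h1 := hθit n2 (n1 - n2)
      rw [show n2 + (n1 - n2) = n1 by omega] at h1
      have h2 : θ ^ (n1 - n2) ≤ θ ^ B := pow_le_pow_of_le_one hθ0 hθ1.le (by omega)
      have h3 : θ ^ (n1 - n2) * (Q.t n2 (k n2 + 1) - Q.t n2 (k n2)) ≤
          θ ^ B * (Q.t n2 (k n2 + 1) - Q.t n2 (k n2)) :=
        mul_le_mul_of_nonneg_right h2 (hℓp n2).le
      have h4 : θ ^ B * (Q.t n2 (k n2 + 1) - Q.t n2 (k n2)) ≤ θ ^ B * (c' * d) :=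
        mul_le_mul_of_nonneg_left hb2 (pow_nonneg hθ0 B)
      have h5 : θ ^ B * (c' * d) < α * d := by
        have h6 := mul_lt_mul_of_pos_right hB hd
        linarith [h6]
      linarith
    have hgRL : nR ≤ nL + B := hgap nR nL hWRl hWLu
    have hgLR : nL ≤ nR + B := hgap nL nR hWLl hWRu
    have hGcmp : ∀ n1 n2 : ℕ, n2 ≤ n1 + B →
        H (Q.t n1 (k n1 + 1)) - H (Q.t n1 (k n1)) ≤
          μH ^ B * (H (Q.t n2 (k n2 + 1)) - H (Q.t n2 (k n2))) := by
      intro n1 n2 hle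
      rcases le_total n1 n2 with h | h
      · have h1 := hGit n1 (n2 - n1)
        rw [show n1 + (n2 - n1) = n2 by omega] at h1
        have h2 : μH ^ (n2 - n1) ≤ μH ^ B := pow_le_pow_right₀ hμH1 (by omega)
        have h3 : μH ^ (n2 - n1) * (H (Q.t n2 (k n2 + 1)) - H (Q.t n2 (k n2))) ≤
            μH ^ B * (H (Q.t n2 (k n2 + 1)) - H (Q.t n2 (k n2))) :=
          mul_le_mul_of_nonneg_right h2 (hGp n2).le
        linarith
      · have h1 := hGdecit n2 (n1 - n2)
        rw [show n2 + (n1 - n2) = n1 by omega] at h1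
        have h2 : (1:ℝ) * (H (Q.t n2 (k n2 + 1)) - H (Q.t n2 (k n2))) ≤
            μH ^ B * (H (Q.t n2 (k n2 + 1)) - H (Q.t n2 (k n2))) :=
          mul_le_mul_of_nonneg_right hμHB1 (hGp n2).le
        linarith
    have hc1 := hGcmp nR nL hgLR
    have hc2 := hGcmp nL nR hgRL
    have hupp : H (x + d) - H x ≤ K * (H x - H (x - d)) := by
      have e2 := mul_le_mul_of_nonneg_left hc1 hMK0
      have e3 := mul_le_mul_of_nonneg_left hLlow hMKB0
      rw [hKdef]
      linarith [hRup, e2, e3]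
    have hdn : H x - H (x - d) ≤ K * (H (x + d) - H x) := by
      have e2 := mul_le_mul_of_nonneg_left hc2 hMK0
      have e3 := mul_le_mul_of_nonneg_left hRlow hMKB0
      rw [hKdef]
      linarith [hLup, e2, e3]
    constructor
    · rw [le_div_iff₀ hLpos]
      have h8 : (H x - H (x - d)) / K ≤ H (x + d) - H x := by
        rw [div_le_iff₀ hK0]
        linarith [hdn]
      rw [div_eq_inv_mul] at h8
      linarith [h8]
    · rw [div_le_iff₀ hLpos]
      linarith [hupp]
  intro x d hd hd2
  have hHn : ∀ (y : ℝ) (j : ℕ), H (y + j) = H y + j := by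
    intro y j
    induction j with
    | zero => simp
    | succ j ih =>
      push_cast
      rw [show y + ((j:ℝ) + 1) = (y + (j:ℝ)) + 1 by ring, hper (y + (j:ℝ)), ih]
      push_cast
      ring
  obtain ⟨m0, hxm⟩ : ∃ m0 : ℕ, Q.t 0 0 + 1 ≤ x + m0 := by
    refine ⟨⌈Q.t 0 0 + 1 - x⌉₊, ?_⟩
    have h1 := Nat.le_ceil (Q.t 0 0 + 1 - x)
    linarith
  obtain ⟨h1, h2⟩ := key (x + m0) hxm d hd hd2
  have e1 : x + (m0:ℝ) + d = (x + d) + m0 := by ring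
  have e2 : x + (m0:ℝ) - d = (x - d) + m0 := by ring
  rw [e1, e2, hHn (x + d) m0, hHn (x - d) m0, hHn x m0] at h1 h2
  have e3 : H (x + d) + (m0:ℝ) - (H x + m0) = H (x + d) - H x := by ring
  have e4 : H x + (m0:ℝ) - (H (x - d) + m0) = H x - H (x - d) := by ring
  rw [e3, e4] at h1 h2
  exact ⟨h1, h2⟩
end

section
/- For each integer m > 1 and each M > 0 there exists c(M) > 0 such that the following holds for all closed intervals I, J ⊆ ℝ: if f₁, g₁ ∈ C^m(J), f₂, g₂ ∈ C^{m-1}(I, J), |(f₁, f₂)|_{I,J,m} < M and |(g₁, g₂)|_{I,J,m} < M, then ‖f₁∘f₂ − g₁∘g₂‖_{m-1} ≤ c(M)·|(f₁ − g₁, f₂ − g₂)|_{I,J,m}. -/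
open Set

/-- The `C^m` norm of `f` on a set `I`: `‖f‖ₘ = max{‖D^i f‖₀ : 0 ≤ i ≤ m}` (as a sup). -/
noncomputable def cknorm (m : ℕ) (I : Set ℝ) (f : ℝ → ℝ) : ℝ :=
  sSup ((fun p : ℕ × ℝ => |iteratedDeriv p.1 f p.2|) '' (Set.Iic m ×ˢ I))

-- iterated derivative of sum / difference
lemma itd_add {n : ℕ} {f g : ℝ → ℝ} (hf : ContDiff ℝ n f) (hg : ContDiff ℝ n g) (x : ℝ) :
    iteratedDeriv n (f + g) x = iteratedDeriv n f x + iteratedDeriv n g x := by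
  simp_rw [← iteratedDerivWithin_univ]
  exact iteratedDerivWithin_add (Set.mem_univ x) uniqueDiffOn_univ hf.contDiffWithinAt hg.contDiffWithinAt

lemma itd_sub {n : ℕ} {f g : ℝ → ℝ} (hf : ContDiff ℝ n f) (hg : ContDiff ℝ n g) (x : ℝ) :
    iteratedDeriv n (f - g) x = iteratedDeriv n f x - iteratedDeriv n g x := by
  simp_rw [← iteratedDerivWithin_univ]
  exact iteratedDerivWithin_sub (Set.mem_univ x) uniqueDiffOn_univ hf.contDiffWithinAt hg.contDiffWithinAt

lemma cd_deriv {k : ℕ} {f : ℝ → ℝ} (hf : ContDiff ℝ (k + 1 : ℕ) f) : ContDiff ℝ (k : ℕ) (deriv f) := by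
  have : ContDiff ℝ ((k : WithTop ℕ∞) + 1) f := by exact_mod_cast hf
  exact (contDiff_succ_iff_deriv.mp this).2.2

lemma cd_diff {k : ℕ} {f : ℝ → ℝ} (hf : ContDiff ℝ (k + 1 : ℕ) f) : Differentiable ℝ f :=
  hf.differentiable (by simp)

-- pointwise Leibniz bound
lemma mul_bound {n : ℕ} {u v : ℝ → ℝ} (hu : ContDiff ℝ n u) (hv : ContDiff ℝ n v)
    {x A B : ℝ} (hA : 0 ≤ A) (hB : 0 ≤ B)
    (hub : ∀ i ≤ n, |iteratedDeriv i u x| ≤ A) (hvb : ∀ i ≤ n, |iteratedDeriv i v x| ≤ B) :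
    |iteratedDeriv n (fun y => u y * v y) x| ≤ 2 ^ n * A * B := by
  have h := norm_iteratedFDeriv_mul_le (𝕜 := ℝ) (N := (n : WithTop ℕ∞)) hu hv x le_rfl
  rw [← Real.norm_eq_abs]
  calc ‖iteratedDeriv n (fun y => u y * v y) x‖
      = ‖iteratedFDeriv ℝ n (fun y => u y * v y) x‖ := (norm_iteratedFDeriv_eq_norm_iteratedDeriv).symm
    _ ≤ ∑ i ∈ Finset.range (n + 1),
        (n.choose i : ℝ) * ‖iteratedFDeriv ℝ i u x‖ * ‖iteratedFDeriv ℝ (n - i) v x‖ := h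
    _ ≤ ∑ i ∈ Finset.range (n + 1), (n.choose i : ℝ) * A * B := by
        apply Finset.sum_le_sum
        intro i hi
        rw [Finset.mem_range] at hi
        have h1 : ‖iteratedFDeriv ℝ i u x‖ ≤ A := by
          rw [norm_iteratedFDeriv_eq_norm_iteratedDeriv, Real.norm_eq_abs]
          exact hub i (by omega)
        have h2 : ‖iteratedFDeriv ℝ (n - i) v x‖ ≤ B := by
          rw [norm_iteratedFDeriv_eq_norm_iteratedDeriv, Real.norm_eq_abs]
          exact hvb (n - i) (by omega)
        have hnc : (0 : ℝ) ≤ (n.choose i : ℝ) := by positivity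
        calc (n.choose i : ℝ) * ‖iteratedFDeriv ℝ i u x‖ * ‖iteratedFDeriv ℝ (n - i) v x‖
            ≤ (n.choose i : ℝ) * A * ‖iteratedFDeriv ℝ (n - i) v x‖ := by
              apply mul_le_mul_of_nonneg_right _ (norm_nonneg _)
              exact mul_le_mul_of_nonneg_left h1 hnc
          _ ≤ (n.choose i : ℝ) * A * B := mul_le_mul_of_nonneg_left h2 (by positivity)
    _ = 2 ^ n * A * B := by
        rw [← Finset.sum_mul, ← Finset.sum_mul]
        norm_cast
        rw [Nat.sum_range_choose]

lemma comp_bound (M : ℝ) (hM : 0 < M) : ∀ k : ℕ, ∃ c : ℝ, 0 < c ∧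
    ∀ (f g : ℝ → ℝ) (x : ℝ), ContDiff ℝ (k : ℕ) f → ContDiff ℝ (k : ℕ) g →
    (∀ i ≤ k, |iteratedDeriv i f (g x)| ≤ M) → (∀ i ≤ k, |iteratedDeriv i g x| ≤ M) →
    ∀ j ≤ k, |iteratedDeriv j (f ∘ g) x| ≤ c := by
  intro k
  induction k with
  | zero =>
    refine ⟨M, hM, fun f g x _ _ hfb _ j hj => ?_⟩
    interval_cases j
    simpa [Function.comp] using hfb 0 le_rfl
  | succ k ih =>
    obtain ⟨c, hc, H⟩ := ih
    refine ⟨max M (2 ^ k * c * M), lt_of_lt_of_le hM (le_max_left _ _), ?_⟩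
    intro f g x hf hg hfb hgb j hj
    match j, hj with
    | 0, _ =>
      refine le_trans ?_ (le_max_left _ _)
      simpa [Function.comp] using hfb 0 (by omega)
    | (j+1), hj =>
      have hj' : j ≤ k := by omega
      have hdf : Differentiable ℝ f := cd_diff hf
      have hdg : Differentiable ℝ g := cd_diff hg
      have hf' : ContDiff ℝ (k : ℕ) (deriv f) := cd_deriv hf
      have hg' : ContDiff ℝ (k : ℕ) (deriv g) := cd_deriv hg
      have hgk : ContDiff ℝ (k : ℕ) g := hg.of_le (by exact_mod_cast Nat.le_succ k)
      have hcomp : deriv (f ∘ g) = fun y => deriv f (g y) * deriv g y := by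
        funext y
        exact deriv_comp y (hdf (g y)) (hdg y)
      rw [iteratedDeriv_succ', hcomp]
      have hub : ∀ l ≤ k, |iteratedDeriv l (deriv f ∘ g) x| ≤ c := by
        apply H (deriv f) g x hf' hgk
        · intro i hi
          rw [← iteratedDeriv_succ']
          exact hfb (i + 1) (by omega)
        · intro i hi
          exact hgb i (by omega)
      have hmain : |iteratedDeriv j (fun y => deriv f (g y) * deriv g y) x| ≤ 2 ^ j * c * M := by
        apply mul_bound ((hf'.comp hgk).of_le (by exact_mod_cast hj')) (hg'.of_le (by exact_mod_cast hj'))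
          hc.le hM.le
        · intro i hi
          exact hub i (le_trans hi hj')
        · intro i hi
          rw [← iteratedDeriv_succ']
          exact hgb (i + 1) (by omega)
      refine le_trans hmain (le_trans ?_ (le_max_right _ _))
      have : (2 : ℝ) ^ j ≤ 2 ^ k := by
        apply pow_le_pow_right₀ one_le_two hj'
      nlinarith [mul_pos hc hM]

lemma diff_zero {M : ℝ} {a' b' : ℝ} {f₁ g₁ f₂ g₂ : ℝ → ℝ} {x ε : ℝ} (hε : 0 ≤ ε)
    (hg₁ : Differentiable ℝ g₁)
    (hf₂x : f₂ x ∈ Icc a' b') (hg₂x : g₂ x ∈ Icc a' b')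
    (hg₁b : ∀ y ∈ Icc a' b', |deriv g₁ y| ≤ M)
    (hd₁ : ∀ y ∈ Icc a' b', |f₁ y - g₁ y| ≤ ε)
    (hd₂ : |f₂ x - g₂ x| ≤ ε) :
    |f₁ (f₂ x) - g₁ (g₂ x)| ≤ (1 + M) * ε := by
  have h1 : |f₁ (f₂ x) - g₁ (f₂ x)| ≤ ε := hd₁ _ hf₂x
  have h2 : ‖g₁ (f₂ x) - g₁ (g₂ x)‖ ≤ M * ‖f₂ x - g₂ x‖ :=
    Convex.norm_image_sub_le_of_norm_deriv_le (fun y _ => (hg₁ y))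
      (fun y hy => by simpa [Real.norm_eq_abs] using hg₁b y hy) (convex_Icc a' b') hg₂x hf₂x
  have hM0 : 0 ≤ M := le_trans (abs_nonneg _) (hg₁b _ hg₂x)
  calc |f₁ (f₂ x) - g₁ (g₂ x)|
      ≤ |f₁ (f₂ x) - g₁ (f₂ x)| + |g₁ (f₂ x) - g₁ (g₂ x)| := by
        have := abs_sub_abs_le_abs_sub (f₁ (f₂ x) - g₁ (g₂ x)) 0
        calc |f₁ (f₂ x) - g₁ (g₂ x)|
            = |(f₁ (f₂ x) - g₁ (f₂ x)) + (g₁ (f₂ x) - g₁ (g₂ x))| := by ring_nf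
          _ ≤ _ := abs_add_le _ _
    _ ≤ ε + M * |f₂ x - g₂ x| := by
        rw [Real.norm_eq_abs, Real.norm_eq_abs] at h2
        exact add_le_add h1 h2
    _ ≤ ε + M * ε := by nlinarith
    _ = (1 + M) * ε := by ring

lemma diff_bound (M : ℝ) (hM : 0 < M) : ∀ k : ℕ, ∃ c : ℝ, 0 < c ∧
    ∀ (a' b' : ℝ) (f₁ g₁ f₂ g₂ : ℝ → ℝ) (x ε : ℝ), 0 ≤ ε →
    ContDiff ℝ (k + 1 : ℕ) f₁ → ContDiff ℝ (k + 1 : ℕ) g₁ →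
    ContDiff ℝ (k : ℕ) f₂ → ContDiff ℝ (k : ℕ) g₂ →
    f₂ x ∈ Icc a' b' → g₂ x ∈ Icc a' b' →
    (∀ i ≤ k + 1, ∀ y ∈ Icc a' b', |iteratedDeriv i f₁ y| ≤ M) →
    (∀ i ≤ k + 1, ∀ y ∈ Icc a' b', |iteratedDeriv i g₁ y| ≤ M) →
    (∀ i ≤ k, |iteratedDeriv i f₂ x| ≤ M) →
    (∀ i ≤ k, |iteratedDeriv i g₂ x| ≤ M) →
    (∀ i ≤ k + 1, ∀ y ∈ Icc a' b', |iteratedDeriv i (f₁ - g₁) y| ≤ ε) →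
    (∀ i ≤ k, |iteratedDeriv i (f₂ - g₂) x| ≤ ε) →
    ∀ j ≤ k, |iteratedDeriv j (f₁ ∘ f₂ - g₁ ∘ g₂) x| ≤ c * ε := by
  intro k
  induction k with
  | zero =>
    refine ⟨1 + M, by linarith, ?_⟩
    intro a' b' f₁ g₁ f₂ g₂ x ε hε hf₁ hg₁ hf₂ hg₂ hf₂x hg₂x hf₁b hg₁b hf₂b hg₂b hd₁ hd₂ j hj
    interval_cases j
    simp only [iteratedDeriv_zero, Pi.sub_apply, Function.comp_apply]
    apply diff_zero hε (cd_diff hg₁) hf₂x hg₂x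
    · intro y hy
      have := hg₁b 1 (by omega) y hy
      rwa [iteratedDeriv_one] at this
    · intro y hy
      have := hd₁ 0 (by omega) y hy
      simpa using this
    · have := hd₂ 0 (by omega)
      simpa using this
  | succ k ih =>
    obtain ⟨c, hc, IH⟩ := ih
    obtain ⟨c₂, hc₂, H₂⟩ := comp_bound M hM k
    refine ⟨(1 + M) + 2 ^ k * c₂ + 2 ^ k * c * M, by positivity, ?_⟩
    intro a' b' f₁ g₁ f₂ g₂ x ε hε hf₁ hg₁ hf₂ hg₂ hf₂x hg₂x hf₁b hg₁b hf₂b hg₂b hd₁ hd₂ j hj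
    have key : ∀ z, 0 ≤ z → z ≤ (1 + M) * ε ∨ z ≤ (2 ^ k * c₂ + 2 ^ k * c * M) * ε →
        z ≤ ((1 + M) + 2 ^ k * c₂ + 2 ^ k * c * M) * ε := by
      rintro z hz (h | h)
      · nlinarith [mul_nonneg (by positivity : (0:ℝ) ≤ 2 ^ k * c₂ + 2 ^ k * c * M) hε]
      · nlinarith [mul_nonneg (by positivity : (0:ℝ) ≤ 1 + M) hε]
    match j, hj with
    | 0, _ =>
      apply key _ (abs_nonneg _)
      left
      simp only [iteratedDeriv_zero, Pi.sub_apply, Function.comp_apply]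
      apply diff_zero hε (cd_diff hg₁) hf₂x hg₂x
      · intro y hy
        have := hg₁b 1 (by omega) y hy
        rwa [iteratedDeriv_one] at this
      · intro y hy
        have := hd₁ 0 (by omega) y hy
        simpa using this
      · have := hd₂ 0 (by omega)
        simpa using this
    | (i+1), hj =>
      have hik : i ≤ k := by omega
      -- differentiability / smoothness facts
      have hdf₁ : Differentiable ℝ f₁ := cd_diff hf₁
      have hdg₁ : Differentiable ℝ g₁ := cd_diff hg₁
      have hdf₂ : Differentiable ℝ f₂ := cd_diff hf₂
      have hdg₂ : Differentiable ℝ g₂ := cd_diff hg₂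
      have hf₁' : ContDiff ℝ (k + 1 : ℕ) (deriv f₁) := cd_deriv hf₁
      have hg₁' : ContDiff ℝ (k + 1 : ℕ) (deriv g₁) := cd_deriv hg₁
      have hf₂' : ContDiff ℝ (k : ℕ) (deriv f₂) := cd_deriv hf₂
      have hg₂' : ContDiff ℝ (k : ℕ) (deriv g₂) := cd_deriv hg₂
      have hf₂k : ContDiff ℝ (k : ℕ) f₂ := hf₂.of_le (by exact_mod_cast Nat.le_succ k)
      have hg₂k : ContDiff ℝ (k : ℕ) g₂ := hg₂.of_le (by exact_mod_cast Nat.le_succ k)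
      have hfgd : ContDiff ℝ (k : ℕ) (deriv (f₂ - g₂)) := cd_deriv (hf₂.sub hg₂)
      -- the decomposition of the first derivative
      have decomp : deriv (f₁ ∘ f₂ - g₁ ∘ g₂) =
          (fun y => deriv f₁ (f₂ y) * deriv (f₂ - g₂) y) +
          (fun y => (deriv f₁ ∘ f₂ - deriv g₁ ∘ g₂) y * deriv g₂ y) := by
        funext y
        have e1 : deriv (f₁ ∘ f₂ - g₁ ∘ g₂) y = deriv (f₁ ∘ f₂) y - deriv (g₁ ∘ g₂) y :=
          deriv_sub ((hdf₁ (f₂ y)).comp y (hdf₂ y)) ((hdg₁ (g₂ y)).comp y (hdg₂ y))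
        have e2 : deriv (f₁ ∘ f₂) y = deriv f₁ (f₂ y) * deriv f₂ y :=
          deriv_comp y (hdf₁ (f₂ y)) (hdf₂ y)
        have e3 : deriv (g₁ ∘ g₂) y = deriv g₁ (g₂ y) * deriv g₂ y :=
          deriv_comp y (hdg₁ (g₂ y)) (hdg₂ y)
        have e4 : deriv (f₂ - g₂) y = deriv f₂ y - deriv g₂ y := deriv_sub (hdf₂ y) (hdg₂ y)
        simp only [Pi.add_apply, Pi.sub_apply, Function.comp_apply, e1, e2, e3, e4]
        ring
      rw [iteratedDeriv_succ', decomp]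
      -- smoothness of the two summands
      have hP : ContDiff ℝ (k : ℕ) (fun y => deriv f₁ (f₂ y) * deriv (f₂ - g₂) y) :=
        ((hf₁'.of_le (by exact_mod_cast Nat.le_succ k)).comp hf₂k).mul hfgd
      have hQ : ContDiff ℝ (k : ℕ) (fun y => (deriv f₁ ∘ f₂ - deriv g₁ ∘ g₂) y * deriv g₂ y) :=
        (((hf₁'.of_le (by exact_mod_cast Nat.le_succ k)).comp hf₂k).sub
          ((hg₁'.of_le (by exact_mod_cast Nat.le_succ k)).comp hg₂k)).mul hg₂'
      have hiP : ContDiff ℝ (i : ℕ) (fun y => deriv f₁ (f₂ y) * deriv (f₂ - g₂) y) :=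
        hP.of_le (by exact_mod_cast hik)
      have hiQ : ContDiff ℝ (i : ℕ) (fun y => (deriv f₁ ∘ f₂ - deriv g₁ ∘ g₂) y * deriv g₂ y) :=
        hQ.of_le (by exact_mod_cast hik)
      have hsplit := itd_add hiP hiQ x
      -- bound on P via comp_bound
      have hub : ∀ l ≤ k, |iteratedDeriv l (deriv f₁ ∘ f₂) x| ≤ c₂ := by
        apply H₂ (deriv f₁) f₂ x (hf₁'.of_le (by exact_mod_cast Nat.le_succ k)) hf₂k
        · intro l hl
          rw [← iteratedDeriv_succ']
          exact hf₁b (l + 1) (by omega) _ hf₂x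
        · intro l hl
          exact hf₂b l (by omega)
      have hPb : |iteratedDeriv i (fun y => deriv f₁ (f₂ y) * deriv (f₂ - g₂) y) x| ≤
          2 ^ i * c₂ * ε := by
        apply mul_bound ((((hf₁'.of_le (by exact_mod_cast Nat.le_succ k)).comp
            hf₂k)).of_le (by exact_mod_cast hik)) (hfgd.of_le (by exact_mod_cast hik)) hc₂.le hε
        · intro l hl
          exact hub l (by omega)
        · intro l hl
          rw [← iteratedDeriv_succ']
          exact hd₂ (l + 1) (by omega)
      -- bound on the difference term via the induction hypothesis
      have hqb : ∀ l ≤ k, |iteratedDeriv l (deriv f₁ ∘ f₂ - deriv g₁ ∘ g₂) x| ≤ c * ε := by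
        apply IH a' b' (deriv f₁) (deriv g₁) f₂ g₂ x ε hε hf₁' hg₁' hf₂k hg₂k hf₂x hg₂x
        · intro l hl y hy
          rw [← iteratedDeriv_succ']
          exact hf₁b (l + 1) (by omega) y hy
        · intro l hl y hy
          rw [← iteratedDeriv_succ']
          exact hg₁b (l + 1) (by omega) y hy
        · intro l hl
          exact hf₂b l (by omega)
        · intro l hl
          exact hg₂b l (by omega)
        · intro l hl y hy
          have : deriv f₁ - deriv g₁ = deriv (f₁ - g₁) := by
            funext z
            exact (deriv_sub (hdf₁ z) (hdg₁ z)).symm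
          rw [this, ← iteratedDeriv_succ']
          exact hd₁ (l + 1) (by omega) y hy
        · intro l hl
          exact hd₂ l (by omega)
      have hQb : |iteratedDeriv i (fun y => (deriv f₁ ∘ f₂ - deriv g₁ ∘ g₂) y * deriv g₂ y) x| ≤
          2 ^ i * (c * ε) * M := by
        apply mul_bound (((((hf₁'.of_le (by exact_mod_cast Nat.le_succ k)).comp hf₂k).sub
            ((hg₁'.of_le (by exact_mod_cast Nat.le_succ k)).comp hg₂k))).of_le
            (by exact_mod_cast hik)) (hg₂'.of_le (by exact_mod_cast hik))
            (mul_nonneg hc.le hε) hM.le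
        · intro l hl
          exact hqb l (by omega)
        · intro l hl
          rw [← iteratedDeriv_succ']
          exact hg₂b (l + 1) (by omega)
      apply key _ (abs_nonneg _)
      right
      rw [hsplit]
      have h2i : (2 : ℝ) ^ i ≤ 2 ^ k := pow_le_pow_right₀ one_le_two hik
      calc |iteratedDeriv i (fun y => deriv f₁ (f₂ y) * deriv (f₂ - g₂) y) x +
            iteratedDeriv i (fun y => (deriv f₁ ∘ f₂ - deriv g₁ ∘ g₂) y * deriv g₂ y) x|
          ≤ |iteratedDeriv i (fun y => deriv f₁ (f₂ y) * deriv (f₂ - g₂) y) x| +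
            |iteratedDeriv i (fun y => (deriv f₁ ∘ f₂ - deriv g₁ ∘ g₂) y * deriv g₂ y) x| :=
            abs_add_le _ _
        _ ≤ 2 ^ i * c₂ * ε + 2 ^ i * (c * ε) * M := add_le_add hPb hQb
        _ ≤ (2 ^ k * c₂ + 2 ^ k * c * M) * ε := by
            have n1 : (0:ℝ) ≤ c₂ * ε := mul_nonneg hc₂.le hε
            have n2 : (0:ℝ) ≤ c * ε * M := mul_nonneg (mul_nonneg hc.le hε) hM.le
            nlinarith [n1, n2, h2i]


lemma cknorm_bddAbove {n : ℕ} (a b : ℝ) {f : ℝ → ℝ} (hf : ContDiff ℝ (n : ℕ) f) :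
    BddAbove ((fun p : ℕ × ℝ => |iteratedDeriv p.1 f p.2|) '' (Set.Iic n ×ˢ Set.Icc a b)) := by
  have hsub : (fun p : ℕ × ℝ => |iteratedDeriv p.1 f p.2|) '' (Set.Iic n ×ˢ Set.Icc a b) ⊆
      ⋃ i ∈ Set.Iic n, (fun y => |iteratedDeriv i f y|) '' Set.Icc a b := by
    rintro _ ⟨⟨i, y⟩, ⟨hi, hy⟩, rfl⟩
    exact Set.mem_biUnion hi ⟨y, hy, rfl⟩
  apply BddAbove.mono hsub
  rw [Set.Finite.bddAbove_biUnion (Set.finite_Iic n)]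
  intro i hi
  exact (isCompact_Icc).bddAbove_image
    ((hf.continuous_iteratedDeriv i (by exact_mod_cast hi)).abs.continuousOn)

lemma le_cknorm {n i : ℕ} {a b x : ℝ} {f : ℝ → ℝ} (hf : ContDiff ℝ (n : ℕ) f)
    (hi : i ≤ n) (hx : x ∈ Set.Icc a b) :
    |iteratedDeriv i f x| ≤ cknorm n (Set.Icc a b) f :=
  le_csSup (cknorm_bddAbove a b hf) ⟨(i, x), ⟨hi, hx⟩, rfl⟩

lemma cknorm_nonneg' {n : ℕ} {a b : ℝ} (hab : a ≤ b) {f : ℝ → ℝ} (hf : ContDiff ℝ (n : ℕ) f) :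
    0 ≤ cknorm n (Set.Icc a b) f :=
  le_trans (abs_nonneg _) (le_cknorm hf (Nat.zero_le n) (Set.left_mem_Icc.2 hab))

/-- Lemma A.1: Lipschitz estimate for the composition operator. For `m > 1` and `M > 0`
there is `c(M) > 0` such that for all closed intervals `I, J` and maps
`f₁, g₁ ∈ C^m(J)`, `f₂, g₂ ∈ C^{m-1}(I, J)` with `|(f₁,f₂)|_{I,J,m} < M` and
`|(g₁,g₂)|_{I,J,m} < M`, one has
`‖f₁∘f₂ − g₁∘g₂‖_{m-1} ≤ c(M)·|(f₁−g₁, f₂−g₂)|_{I,J,m}`. -/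
theorem composition_lipschitz (m : ℕ) (hm : 1 < m) (M : ℝ) (hM : 0 < M) :
    ∃ c : ℝ, 0 < c ∧
      ∀ (a b a' b' : ℝ), a ≤ b → a' ≤ b' →
      ∀ f₁ f₂ g₁ g₂ : ℝ → ℝ,
        ContDiff ℝ m f₁ → ContDiff ℝ m g₁ →
        ContDiff ℝ (m - 1) f₂ → ContDiff ℝ (m - 1) g₂ →
        Set.MapsTo f₂ (Set.Icc a b) (Set.Icc a' b') →
        Set.MapsTo g₂ (Set.Icc a b) (Set.Icc a' b') →
        max (cknorm m (Set.Icc a' b') f₁) (cknorm (m - 1) (Set.Icc a b) f₂) < M →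
        max (cknorm m (Set.Icc a' b') g₁) (cknorm (m - 1) (Set.Icc a b) g₂) < M →
        cknorm (m - 1) (Set.Icc a b) (f₁ ∘ f₂ - g₁ ∘ g₂) ≤
          c * max (cknorm m (Set.Icc a' b') (f₁ - g₁))
              (cknorm (m - 1) (Set.Icc a b) (f₂ - g₂)) := by
  obtain ⟨c, hc, H⟩ := diff_bound M hM (m - 1)
  refine ⟨c, hc, ?_⟩
  intro a b a' b' hab ha'b' f₁ f₂ g₁ g₂ hf₁ hg₁ hf₂ hg₂ hmf₂ hmg₂ hfM hgM
  have hk1 : m - 1 + 1 = m := by omega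
  have hcast : ((m : WithTop ℕ∞) - 1) = ((m - 1 : ℕ) : WithTop ℕ∞) := by
    obtain ⟨n, rfl⟩ : ∃ n, m = n + 2 := ⟨m - 2, by omega⟩
    push_cast
    rfl
  rw [hcast] at hf₂ hg₂
  have hf₁' : ContDiff ℝ (m - 1 + 1 : ℕ) f₁ := by rw [hk1]; exact hf₁
  have hg₁' : ContDiff ℝ (m - 1 + 1 : ℕ) g₁ := by rw [hk1]; exact hg₁
  set ε := max (cknorm m (Set.Icc a' b') (f₁ - g₁)) (cknorm (m - 1) (Set.Icc a b) (f₂ - g₂))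
    with hεdef
  have hε : 0 ≤ ε := le_trans (cknorm_nonneg' ha'b' (hf₁.sub hg₁)) (le_max_left _ _)
  -- pointwise bounds from the cknorm hypotheses
  have hf₁M : ∀ i ≤ m, ∀ y ∈ Set.Icc a' b', |iteratedDeriv i f₁ y| ≤ M := fun i hi y hy =>
    le_of_lt (lt_of_le_of_lt (le_trans (le_cknorm hf₁ hi hy) (le_max_left _ _)) hfM)
  have hg₁M : ∀ i ≤ m, ∀ y ∈ Set.Icc a' b', |iteratedDeriv i g₁ y| ≤ M := fun i hi y hy =>
    le_of_lt (lt_of_le_of_lt (le_trans (le_cknorm hg₁ hi hy) (le_max_left _ _)) hgM)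
  have hf₂M : ∀ i ≤ m - 1, ∀ y ∈ Set.Icc a b, |iteratedDeriv i f₂ y| ≤ M := fun i hi y hy =>
    le_of_lt (lt_of_le_of_lt (le_trans (le_cknorm hf₂ hi hy) (le_max_right _ _)) hfM)
  have hg₂M : ∀ i ≤ m - 1, ∀ y ∈ Set.Icc a b, |iteratedDeriv i g₂ y| ≤ M := fun i hi y hy =>
    le_of_lt (lt_of_le_of_lt (le_trans (le_cknorm hg₂ hi hy) (le_max_right _ _)) hgM)
  have hd₁ : ∀ i ≤ m, ∀ y ∈ Set.Icc a' b', |iteratedDeriv i (f₁ - g₁) y| ≤ ε := fun i hi y hy =>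
    le_trans (le_cknorm (hf₁.sub hg₁) hi hy) (le_max_left _ _)
  have hd₂ : ∀ i ≤ m - 1, ∀ y ∈ Set.Icc a b, |iteratedDeriv i (f₂ - g₂) y| ≤ ε := fun i hi y hy =>
    le_trans (le_cknorm (hf₂.sub hg₂) hi hy) (le_max_right _ _)
  apply Real.sSup_le _ (mul_nonneg hc.le hε)
  rintro _ ⟨⟨j, x⟩, ⟨hj, hx⟩, rfl⟩
  simp only [Set.mem_Iic] at hj
  apply H a' b' f₁ g₁ f₂ g₂ x ε hε hf₁' hg₁' hf₂ hg₂ (hmf₂ hx) (hmg₂ hx) _ _ _ _ _ _ j hj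
  · intro i hi y hy
    exact hf₁M i (by omega) y hy
  · intro i hi y hy
    exact hg₁M i (by omega) y hy
  · intro i hi
    exact hf₂M i hi x hx
  · intro i hi
    exact hg₂M i hi x hx
  · intro i hi y hy
    exact hd₁ i (by omega) y hy
  · intro i hi
    exact hd₂ i hi x hx
end

section
/- Given an integer r ≥ 3 and an orientation-preserving C^r diffeomorphism φ : I → ℝ of a closed interval I onto its image, there exist constants ℓ_φ > 0 and K_φ > 0 with the following property: for each closed interval Δ ⊆ I with |Δ| ≤ ℓ_φ there exists a fractional linear transformation T_Δ with T_Δ(Δ) = φ(Δ) such that (a) sup_{x∈Δ}|D^kφ(x) − D^kT_Δ(x)| ≤ K_φ·|Δ|^{3−k} for k = 0, 1, 2, and (b) sup_{x∈Δ}|D^kT_Δ(x)| ≤ K_φ for all 1 ≤ k ≤ r. -/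
open Set


noncomputable def moebG (C D : ℝ) (k : ℕ) (x : ℝ) : ℝ :=
  (k.factorial : ℝ) * (-C) ^ (k - 1) / (C * x + D) ^ (k + 1)

lemma moeb_hasDerivAt (A B C D : ℝ) (hdet : A * D - B * C = 1) (x : ℝ) (hx : C * x + D ≠ 0) :
    HasDerivAt (fun x : ℝ => (A * x + B) / (C * x + D)) (((C * x + D) ^ 2)⁻¹) x := by
  have h1 : HasDerivAt (fun x : ℝ => A * x + B) A x := by
    simpa using ((hasDerivAt_id x).const_mul A).add_const B
  have h2 : HasDerivAt (fun x : ℝ => C * x + D) C x := by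
    simpa using ((hasDerivAt_id x).const_mul C).add_const D
  have := h1.fun_div h2 hx
  refine this.congr_deriv ?_
  field_simp
  ring_nf
  nlinarith [hdet]

lemma moebG_hasDerivAt (C D : ℝ) (k : ℕ) (hk : 1 ≤ k) (x : ℝ) (hx : C * x + D ≠ 0) :
    HasDerivAt (moebG C D k) (moebG C D (k + 1) x) x := by
  obtain ⟨j, rfl⟩ : ∃ j, k = j + 1 := ⟨k - 1, (Nat.succ_pred_eq_of_pos hk).symm⟩
  have h2 : HasDerivAt (fun x : ℝ => C * x + D) C x := by
    simpa using ((hasDerivAt_id x).const_mul C).add_const D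
  have h3 : HasDerivAt (fun x : ℝ => (C * x + D) ^ (j + 2))
      ((j + 2 : ℕ) * (C * x + D) ^ (j + 1) * C) x := by
    simpa using (h2.fun_pow (j + 2))
  have hpow : (C * x + D) ^ (j + 2) ≠ 0 := pow_ne_zero _ hx
  have h4 := ((hasDerivAt_const x (((j+1).factorial : ℝ) * (-C) ^ j)).fun_div h3 hpow)
  refine h4.congr_deriv ?_
  unfold moebG
  simp only [Nat.add_sub_cancel, Nat.factorial_succ (j + 1)]
  field_simp
  push_cast
  ring

lemma moeb_denom_isOpen (C D : ℝ) : IsOpen {x : ℝ | C * x + D ≠ 0} := by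
  have : Continuous (fun x : ℝ => C * x + D) := by continuity
  exact isOpen_ne.preimage this

lemma moeb_iteratedDeriv (A B C D : ℝ) (hdet : A * D - B * C = 1) :
    ∀ k, 1 ≤ k → ∀ x, C * x + D ≠ 0 →
      iteratedDeriv k (fun x : ℝ => (A * x + B) / (C * x + D)) x = moebG C D k x := by
  intro k
  induction k with
  | zero => omega
  | succ n ih =>
    intro _ x hx
    rcases Nat.eq_zero_or_pos n with hn | hn
    · subst hn
      rw [iteratedDeriv_one, (moeb_hasDerivAt A B C D hdet x hx).deriv]
      unfold moebG
      norm_num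
    · rw [iteratedDeriv_succ]
      have heq : Set.EqOn (iteratedDeriv n (fun x : ℝ => (A * x + B) / (C * x + D)))
          (moebG C D n) {x : ℝ | C * x + D ≠ 0} := fun y hy => ih hn y hy
      have hev : iteratedDeriv n (fun x : ℝ => (A * x + B) / (C * x + D)) =ᶠ[nhds x]
          moebG C D n :=
        Filter.eventuallyEq_of_mem ((moeb_denom_isOpen C D).mem_nhds hx) heq
      rw [hev.deriv_eq, (moebG_hasDerivAt C D n hn x hx).deriv]

lemma moeb_iteratedDeriv_hasDerivAt (A B C D : ℝ) (hdet : A * D - B * C = 1)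
    (k : ℕ) (x : ℝ) (hx : C * x + D ≠ 0) :
    HasDerivAt (iteratedDeriv k (fun x : ℝ => (A * x + B) / (C * x + D)))
      (moebG C D (k + 1) x) x := by
  rcases Nat.eq_zero_or_pos k with hk | hk
  · subst hk
    rw [iteratedDeriv_zero]
    have := moeb_hasDerivAt A B C D hdet x hx
    convert this using 1
    unfold moebG; norm_num
  · have heq : Set.EqOn (iteratedDeriv k (fun x : ℝ => (A * x + B) / (C * x + D)))
        (moebG C D k) {x : ℝ | C * x + D ≠ 0} :=
      fun y hy => moeb_iteratedDeriv A B C D hdet k hk y hy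
    have hev : iteratedDeriv k (fun x : ℝ => (A * x + B) / (C * x + D)) =ᶠ[nhds x]
        moebG C D k :=
      Filter.eventuallyEq_of_mem ((moeb_denom_isOpen C D).mem_nhds hx) heq
    exact (moebG_hasDerivAt C D k hk x hx).congr_of_eventuallyEq hev

lemma moebG_bound (C D : ℝ) (k r : ℕ) (hk : 1 ≤ k) (hkr : k ≤ r) (x : ℝ)
    (c d : ℝ) (hd : 0 < d) (hC : |C| ≤ c) (hden : d ≤ |C * x + D|) :
    |moebG C D k x| ≤ (r.factorial : ℝ) * (1 + c) ^ r * (1 + 1 / d) ^ (r + 1) := by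
  have hc0 : 0 ≤ c := le_trans (abs_nonneg C) hC
  have hden0 : 0 < |C * x + D| := lt_of_lt_of_le hd hden
  have h1 : |moebG C D k x| = (k.factorial : ℝ) * |C| ^ (k - 1) / |C * x + D| ^ (k + 1) := by
    unfold moebG
    rw [abs_div, abs_mul, abs_pow, abs_pow, abs_neg, Nat.abs_cast]
  rw [h1]
  have e1 : (k.factorial : ℝ) ≤ (r.factorial : ℝ) := by
    exact_mod_cast Nat.factorial_le hkr
  have e2 : |C| ^ (k - 1) ≤ (1 + c) ^ r := by
    calc |C| ^ (k - 1) ≤ (1 + c) ^ (k - 1) :=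
          pow_le_pow_left₀ (abs_nonneg C) (by linarith) _
      _ ≤ (1 + c) ^ r := pow_le_pow_right₀ (by linarith) (by omega)
  have e3 : 1 / |C * x + D| ^ (k + 1) ≤ (1 + 1 / d) ^ (r + 1) := by
    rw [one_div, ← inv_pow]
    calc (|C * x + D|⁻¹) ^ (k + 1) ≤ (1 + 1 / d) ^ (k + 1) := by
          apply pow_le_pow_left₀ (by positivity)
          rw [one_div]
          have : |C * x + D|⁻¹ ≤ d⁻¹ := by
            apply inv_anti₀ hd hden
          linarith
      _ ≤ (1 + 1 / d) ^ (r + 1) := by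
          have h1d : 0 < 1 / d := by positivity
          apply pow_le_pow_right₀ (by linarith) (by omega)
  calc (k.factorial : ℝ) * |C| ^ (k - 1) / |C * x + D| ^ (k + 1)
      = (k.factorial : ℝ) * |C| ^ (k - 1) * (1 / |C * x + D| ^ (k + 1)) := by ring
    _ ≤ (r.factorial : ℝ) * (1 + c) ^ r * (1 + 1 / d) ^ (r + 1) := by
        apply mul_le_mul (mul_le_mul e1 e2 (by positivity) (by positivity)) e3 (by positivity)
          (by positivity)

/-- MVT-type bound. -/
lemma step_bound {f f' : ℝ → ℝ} {u v M : ℝ}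
    (hf : ∀ x ∈ Icc u v, HasDerivAt f (f' x) x)
    (hbound : ∀ x ∈ Icc u v, |f' x| ≤ M)
    {x y : ℝ} (hx : x ∈ Icc u v) (hy : y ∈ Icc u v) :
    |f y - f x| ≤ M * (v - u) := by
  have h := Convex.norm_image_sub_le_of_norm_hasDerivWithin_le
    (f := f) (f' := f') (s := Icc u v) (C := M)
    (fun z hz => (hf z hz).hasDerivWithinAt) (fun z hz => hbound z hz)
    (convex_Icc u v) hx hy
  have hM : (0:ℝ) ≤ M := le_trans (abs_nonneg _) (hbound x hx)
  have : |y - x| ≤ v - u := by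
    rw [abs_le]; constructor <;> [linarith [hx.1, hx.2, hy.1, hy.2]; linarith [hx.1, hx.2, hy.1, hy.2]]
  calc |f y - f x| = ‖f y - f x‖ := rfl
    _ ≤ M * ‖y - x‖ := h
    _ ≤ M * (v - u) := by
        have : ‖y - x‖ ≤ v - u := this
        nlinarith

/-- Core approximation lemma via double Rolle. -/
lemma approx_core (u v : ℝ) (huv : u < v) (E : ℕ → ℝ → ℝ)
    (hD : ∀ k ≤ 2, ∀ x ∈ Icc u v, HasDerivAt (E k) (E (k + 1) x) x)
    (hu0 : E 0 u = 0) (hv0 : E 0 v = 0) (hu1 : E 1 u = 0)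
    (M : ℝ) (hM : ∀ x ∈ Icc u v, |E 3 x| ≤ M) :
    ∀ k ≤ 2, ∀ x ∈ Icc u v, |E k x| ≤ M * (v - u) ^ (3 - k) := by
  have hM0 : (0:ℝ) ≤ M := le_trans (abs_nonneg _) (hM u (left_mem_Icc.mpr huv.le))
  have hvu : (0:ℝ) ≤ v - u := by linarith
  -- continuity of E 0, E 1 on Icc u v
  have hc0 : ContinuousOn (E 0) (Icc u v) :=
    fun x hx => ((hD 0 (by norm_num) x hx).continuousAt).continuousWithinAt
  have hc1 : ContinuousOn (E 1) (Icc u v) :=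
    fun x hx => ((hD 1 (by norm_num) x hx).continuousAt).continuousWithinAt
  -- Rolle for E 0
  obtain ⟨ξ, hξ, hξ0⟩ := exists_deriv_eq_zero huv hc0 (hu0.trans hv0.symm)
  have hξmem : ξ ∈ Icc u v := Ioo_subset_Icc_self hξ
  have hE1ξ : E 1 ξ = 0 := by
    rw [← (hD 0 (by norm_num) ξ hξmem).deriv]; exact hξ0
  -- Rolle for E 1 on [u, ξ]
  obtain ⟨η, hη, hη0⟩ := exists_deriv_eq_zero hξ.1
    (hc1.mono (Icc_subset_Icc le_rfl hξmem.2)) (hu1.trans hE1ξ.symm)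
  have hηmem : η ∈ Icc u v := by
    constructor
    · exact le_of_lt hη.1
    · exact le_trans hη.2.le hξmem.2
  have hE2η : E 2 η = 0 := by
    rw [← (hD 1 (by norm_num) η hηmem).deriv]; exact hη0
  -- bound E 2
  have hB2 : ∀ x ∈ Icc u v, |E 2 x| ≤ M * (v - u) := by
    intro x hx
    have := step_bound (hD 2 le_rfl) hM hηmem hx
    rwa [hE2η, sub_zero] at this
  -- bound E 1
  have hB1 : ∀ x ∈ Icc u v, |E 1 x| ≤ M * (v - u) ^ 2 := by
    intro x hx
    have := step_bound (hD 1 (by norm_num)) hB2 (left_mem_Icc.mpr huv.le) hx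
    rw [hu1, sub_zero] at this
    calc |E 1 x| ≤ M * (v - u) * (v - u) := this
      _ = M * (v - u) ^ 2 := by ring
  -- bound E 0
  have hB0 : ∀ x ∈ Icc u v, |E 0 x| ≤ M * (v - u) ^ 3 := by
    intro x hx
    have := step_bound (hD 0 (by norm_num)) hB1 (left_mem_Icc.mpr huv.le) hx
    rw [hu0, sub_zero] at this
    calc |E 0 x| ≤ M * (v - u) ^ 2 * (v - u) := this
      _ = M * (v - u) ^ 3 := by ring
  intro k hk x hx
  interval_cases k
  · simpa using hB0 x hx
  · simpa using hB1 x hx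
  · simpa using hB2 x hx

lemma image_Icc_of_deriv_pos {f : ℝ → ℝ} {u v : ℝ} (huv : u ≤ v)
    (hc : ContinuousOn f (Icc u v))
    (hd : ∀ x ∈ Ioo u v, 0 < deriv f x) :
    f '' Icc u v = Icc (f u) (f v) := by
  have hmono : MonotoneOn f (Icc u v) := by
    rcases eq_or_lt_of_le huv with rfl | hlt
    · intro x hx y hy hxy
      have : x = u := le_antisymm hx.2 hx.1
      have : y = u := le_antisymm hy.2 hy.1
      simp_all
    · have := strictMonoOn_of_deriv_pos (convex_Icc u v) hc (by
        rwa [interior_Icc])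
      exact this.monotoneOn
  apply Subset.antisymm
  · intro y hy
    obtain ⟨x, hx, rfl⟩ := hy
    exact ⟨hmono (left_mem_Icc.mpr huv) hx hx.1, hmono hx (right_mem_Icc.mpr huv) hx.2⟩
  · exact intermediate_value_Icc huv hc

lemma my_iteratedDerivWithin_of_isOpen {f : ℝ → ℝ} {s : Set ℝ} {n : ℕ} {x : ℝ}
    (hs : IsOpen s) (hx : x ∈ s) : iteratedDerivWithin n f s x = iteratedDeriv n f x := by
  rw [iteratedDerivWithin_eq_iteratedFDerivWithin, iteratedDeriv_eq_iteratedFDeriv,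
    iteratedFDerivWithin_of_isOpen n hs hx]

/-- On an open set, iterated derivatives of a `C^r` function are continuous. -/
lemma contDiffOn_continuousOn_iteratedDeriv {f : ℝ → ℝ} {U : Set ℝ} {r k : ℕ}
    (hU : IsOpen U) (hf : ContDiffOn ℝ r f U) (hk : k ≤ r) :
    ContinuousOn (iteratedDeriv k f) U := by
  have h := hf.continuousOn_iteratedDerivWithin (m := k) (by exact_mod_cast hk)
    hU.uniqueDiffOn
  exact h.congr fun x hx => (my_iteratedDerivWithin_of_isOpen hU hx).symm

/-- On an open set, a `C^r` function's `k`-th iterated derivative has derivative the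
`(k+1)`-st, for `k < r`. -/
lemma contDiffOn_hasDerivAt_iteratedDeriv {f : ℝ → ℝ} {U : Set ℝ} {r k : ℕ}
    (hU : IsOpen U) (hf : ContDiffOn ℝ r f U) (hk : k < r) {x : ℝ} (hx : x ∈ U) :
    HasDerivAt (iteratedDeriv k f) (iteratedDeriv (k + 1) f x) x := by
  have hdiff : DifferentiableOn ℝ (iteratedDerivWithin k f U) U :=
    hf.differentiableOn_iteratedDerivWithin (by exact_mod_cast hk) hU.uniqueDiffOn
  have hdAt : DifferentiableAt ℝ (iteratedDerivWithin k f U) x :=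
    (hdiff x hx).differentiableAt (hU.mem_nhds hx)
  have hev : iteratedDerivWithin k f U =ᶠ[nhds x] iteratedDeriv k f :=
    Filter.eventuallyEq_of_mem (hU.mem_nhds hx)
      (fun y hy => my_iteratedDerivWithin_of_isOpen hU hy)
  have hdAt' : DifferentiableAt ℝ (iteratedDeriv k f) x :=
    hdAt.congr_of_eventuallyEq hev.symm
  have := hdAt'.hasDerivAt
  rwa [show deriv (iteratedDeriv k f) x = iteratedDeriv (k + 1) f x from
    (congrFun (iteratedDeriv_succ).symm x)] at this

lemma moebG3_bound (C D x c d : ℝ) (hd : 0 < d) (hC : |C| ≤ c) (hden : d ≤ |C * x + D|) :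
    |moebG C D 3 x| ≤ 6 * c ^ 2 / d ^ 4 := by
  have hc0 : 0 ≤ c := le_trans (abs_nonneg C) hC
  have h1 : |moebG C D 3 x| = 6 * C ^ 2 / |C * x + D| ^ 4 := by
    unfold moebG
    rw [abs_div, abs_mul, abs_pow, abs_pow, abs_neg]
    norm_num [Nat.factorial]
  rw [h1]
  have hC2 : C ^ 2 ≤ c ^ 2 := by nlinarith [abs_nonneg C, neg_abs_le C, le_abs_self C]
  apply div_le_div₀ (by positivity)
    (by nlinarith)
    (by positivity)
    (pow_le_pow_left₀ hd.le hden 4)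

/-- Lemma A.7: Moebius approximation of a `C^r` diffeomorphism.  Given `r ≥ 3` and an
orientation-preserving `C^r` diffeomorphism `φ` of a closed interval `I = [a, b]` into
`ℝ`, there are constants `ℓ_φ, K_φ > 0` such that every closed subinterval
`Δ = [u, v] ⊆ I` of length `≤ ℓ_φ` admits a fractional linear transformation `T` with
`T(Δ) = φ(Δ)`, `sup_Δ |D^kφ − D^kT| ≤ K_φ|Δ|^{3−k}` for `k = 0, 1, 2`, and
`sup_Δ |D^kT| ≤ K_φ` for `1 ≤ k ≤ r`. -/
theorem moebius_approximation (r : ℕ) (hr : 3 ≤ r) (a b : ℝ) (hab : a ≤ b)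
    (φ : ℝ → ℝ) (U : Set ℝ) (hU : IsOpen U) (hIU : Set.Icc a b ⊆ U)
    (hφ : ContDiffOn ℝ r φ U) (hφ' : ∀ x ∈ U, 0 < deriv φ x) :
    ∃ ℓ K : ℝ, 0 < ℓ ∧ 0 < K ∧
      ∀ u v : ℝ, u ≤ v → Set.Icc u v ⊆ Set.Icc a b → v - u ≤ ℓ →
        ∃ A B C D : ℝ, A * D - B * C = 1 ∧ (∀ x ∈ Set.Icc u v, C * x + D ≠ 0) ∧
          (fun x : ℝ => (A * x + B) / (C * x + D)) '' Set.Icc u v = φ '' Set.Icc u v ∧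
          (∀ k ≤ 2, ∀ x ∈ Set.Icc u v,
            |iteratedDeriv k φ x -
              iteratedDeriv k (fun x : ℝ => (A * x + B) / (C * x + D)) x| ≤
              K * (v - u) ^ (3 - k)) ∧
          (∀ k, 1 ≤ k → k ≤ r → ∀ x ∈ Set.Icc u v,
            |iteratedDeriv k (fun x : ℝ => (A * x + B) / (C * x + D)) x| ≤ K) := by
  -- continuity of derivatives on U
  have hder : ContinuousOn (deriv φ) U := by
    have := contDiffOn_continuousOn_iteratedDeriv hU hφ (show 1 ≤ r by omega)
    rwa [iteratedDeriv_one] at this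
  have hSne : (Icc a b).Nonempty := nonempty_Icc.mpr hab
  -- min of deriv φ on Icc a b
  obtain ⟨m0, hm0pos, hm01, hm0le⟩ :
      ∃ m0 : ℝ, 0 < m0 ∧ m0 ≤ 1 ∧ ∀ x ∈ Icc a b, m0 ≤ deriv φ x := by
    obtain ⟨x₀, hx₀, hmin⟩ := isCompact_Icc.exists_isMinOn hSne (hder.mono hIU)
    exact ⟨min (deriv φ x₀) 1, lt_min (hφ' x₀ (hIU hx₀)) one_pos, min_le_right _ _,
      fun x hx => le_trans (min_le_left _ _) (hmin hx)⟩
  -- max of deriv φ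
  obtain ⟨M0, hM0ge1, hM0ge⟩ :
      ∃ M0 : ℝ, 1 ≤ M0 ∧ ∀ x ∈ Icc a b, deriv φ x ≤ M0 := by
    obtain ⟨M', hM'⟩ := isCompact_Icc.exists_bound_of_continuousOn (hder.mono hIU)
    exact ⟨max M' 1, le_max_right _ _,
      fun x hx => le_trans (le_trans (le_abs_self _) (hM' x hx)) (le_max_left _ _)⟩
  have hM0pos : 0 < M0 := lt_of_lt_of_le one_pos hM0ge1
  have hm0M0 : m0 ≤ M0 := le_trans hm01 hM0ge1
  -- bound for second derivative
  obtain ⟨K2, hK2pos, hK2le⟩ :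
      ∃ K2 : ℝ, 0 < K2 ∧ ∀ x ∈ Icc a b, |iteratedDeriv 2 φ x| ≤ K2 := by
    obtain ⟨M2', hM2'⟩ := isCompact_Icc.exists_bound_of_continuousOn
      ((contDiffOn_continuousOn_iteratedDeriv hU hφ (show 2 ≤ r by omega)).mono hIU)
    exact ⟨max M2' 1, lt_of_lt_of_le one_pos (le_max_right _ _),
      fun x hx => le_trans (hM2' x hx) (le_max_left _ _)⟩
  -- bound for third derivative
  obtain ⟨K3, hK3pos, hK3le⟩ :
      ∃ K3 : ℝ, 0 < K3 ∧ ∀ x ∈ Icc a b, |iteratedDeriv 3 φ x| ≤ K3 := by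
    obtain ⟨M3', hM3'⟩ := isCompact_Icc.exists_bound_of_continuousOn
      ((contDiffOn_continuousOn_iteratedDeriv hU hφ (show 3 ≤ r by omega)).mono hIU)
    exact ⟨max M3' 1, lt_of_lt_of_le one_pos (le_max_right _ _),
      fun x hx => le_trans (hM3' x hx) (le_max_left _ _)⟩
  -- square roots
  obtain ⟨sm, hsmpos, hsm2⟩ : ∃ s : ℝ, 0 < s ∧ s ^ 2 = m0 :=
    ⟨Real.sqrt m0, Real.sqrt_pos.mpr hm0pos, Real.sq_sqrt hm0pos.le⟩
  obtain ⟨sM, hsMpos, hsM2⟩ : ∃ s : ℝ, 0 < s ∧ s ^ 2 = M0 :=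
    ⟨Real.sqrt M0, Real.sqrt_pos.mpr hM0pos, Real.sq_sqrt hM0pos.le⟩
  -- constants
  obtain ⟨δ, hδdef⟩ : ∃ x : ℝ, x = m0 * sm / M0 ^ 2 := ⟨_, rfl⟩
  obtain ⟨c0, hc0def⟩ : ∃ x : ℝ, x = K2 * sM / m0 ^ 2 := ⟨_, rfl⟩
  obtain ⟨c1, hc1def⟩ : ∃ x : ℝ, x = K2 / (2 * m0 * sm) := ⟨_, rfl⟩
  obtain ⟨δ1, hδ1def⟩ : ∃ x : ℝ, x = 1 / sM := ⟨_, rfl⟩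
  have hδpos : 0 < δ := by rw [hδdef]; positivity
  have hc0pos : 0 < c0 := by rw [hc0def]; positivity
  have hc1pos : 0 < c1 := by rw [hc1def]; positivity
  have hδ1pos : 0 < δ1 := by rw [hδ1def]; positivity
  obtain ⟨c, hcdef⟩ : ∃ x : ℝ, x = c0 + c1 := ⟨_, rfl⟩
  obtain ⟨d, hddef⟩ : ∃ x : ℝ, x = min δ δ1 := ⟨_, rfl⟩
  have hcpos : 0 < c := by rw [hcdef]; positivity
  have hdpos : 0 < d := by rw [hddef]; exact lt_min hδpos hδ1pos
  have hc0c : c0 ≤ c := by rw [hcdef]; linarith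
  have hc1c : c1 ≤ c := by rw [hcdef]; linarith
  have hdδ : d ≤ δ := by rw [hddef]; exact min_le_left _ _
  have hdδ1 : d ≤ δ1 := by rw [hddef]; exact min_le_right _ _
  obtain ⟨Ka, hKadef⟩ : ∃ x : ℝ, x = K3 + 6 * c ^ 2 / d ^ 4 := ⟨_, rfl⟩
  obtain ⟨Kb, hKbdef⟩ : ∃ x : ℝ, x = (r.factorial : ℝ) * (1 + c) ^ r * (1 + 1 / d) ^ (r + 1) :=
    ⟨_, rfl⟩
  have hKapos : 0 < Ka := by rw [hKadef]; positivity
  have hKbpos : 0 < Kb := by rw [hKbdef]; positivity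
  refine ⟨1, Ka + Kb + 1, one_pos, by positivity, ?_⟩
  intro u v huv hsub hle
  have hsubU : Icc u v ⊆ U := hsub.trans hIU
  rcases eq_or_lt_of_le huv with rfl | hlt
  · -- degenerate case v = u
    have huS : u ∈ Icc a b := hsub (left_mem_Icc.mpr le_rfl)
    obtain ⟨p, hpdef⟩ : ∃ x : ℝ, x = deriv φ u := ⟨_, rfl⟩
    have hppos : 0 < p := hpdef ▸ hφ' u (hIU huS)
    have hpm : m0 ≤ p := hpdef ▸ hm0le u huS
    have hpM : p ≤ M0 := hpdef ▸ hM0ge u huS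
    obtain ⟨q, hqpos, hq2⟩ : ∃ x : ℝ, 0 < x ∧ x ^ 2 = p :=
      ⟨Real.sqrt p, Real.sqrt_pos.mpr hppos, Real.sq_sqrt hppos.le⟩
    have hqsm : sm ≤ q := by
      have h : sm ^ 2 ≤ q ^ 2 := by rw [hsm2, hq2]; exact hpm
      exact (pow_le_pow_iff_left₀ hsmpos.le hqpos.le two_ne_zero).mp h
    have hqsM : q ≤ sM := by
      have h : q ^ 2 ≤ sM ^ 2 := by rw [hsM2, hq2]; exact hpM
      exact (pow_le_pow_iff_left₀ hqpos.le hsMpos.le two_ne_zero).mp h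
    obtain ⟨y0, hy0def⟩ : ∃ x : ℝ, x = φ u := ⟨_, rfl⟩
    obtain ⟨y2, hy2def⟩ : ∃ x : ℝ, x = iteratedDeriv 2 φ u := ⟨_, rfl⟩
    obtain ⟨C, hCdef⟩ : ∃ x : ℝ, x = -y2 / (2 * q ^ 3) := ⟨_, rfl⟩
    obtain ⟨D, hDdef⟩ : ∃ x : ℝ, x = q⁻¹ - C * u := ⟨_, rfl⟩
    obtain ⟨A, hAdef⟩ : ∃ x : ℝ, x = q + C * y0 := ⟨_, rfl⟩
    obtain ⟨B, hBdef⟩ : ∃ x : ℝ, x = y0 * q⁻¹ - A * u := ⟨_, rfl⟩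
    have hCuD : C * u + D = q⁻¹ := by rw [hDdef]; ring
    have hdet : A * D - B * C = 1 := by
      have h1 : A * D - B * C = (A - C * y0) * q⁻¹ := by rw [hDdef, hBdef]; ring
      rw [h1, show A - C * y0 = q by rw [hAdef]; ring, mul_inv_cancel₀ hqpos.ne']
    have hne : ∀ x ∈ Icc u u, C * x + D ≠ 0 := by
      intro x hx
      rw [show x = u from le_antisymm hx.2 hx.1, hCuD]
      exact inv_ne_zero hqpos.ne'
    have hTu : (A * u + B) / (C * u + D) = y0 := by
      rw [hCuD, show A * u + B = y0 * q⁻¹ by rw [hBdef]; ring]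
      field_simp
    refine ⟨A, B, C, D, hdet, hne, ?_, ?_, ?_⟩
    · rw [Icc_self, image_singleton, image_singleton, hTu, hy0def]
    · intro k hk x hx
      rw [show x = u from le_antisymm hx.2 hx.1]
      have hzero : (u - u : ℝ) ^ (3 - k) = 0 := by
        rw [sub_self, zero_pow]; omega
      rw [hzero, mul_zero]
      have heq : iteratedDeriv k φ u
          = iteratedDeriv k (fun x : ℝ => (A * x + B) / (C * x + D)) u := by
        interval_cases k
        · simpa [iteratedDeriv_zero] using (hy0def.symm.trans hTu.symm)
        · rw [moeb_iteratedDeriv A B C D hdet 1 le_rfl u (hne u (left_mem_Icc.mpr le_rfl)),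
            iteratedDeriv_one]
          unfold moebG
          rw [hCuD, ← hpdef]
          simp only [Nat.factorial_one, Nat.cast_one, pow_zero, one_mul]
          rw [← hq2]
          field_simp
          norm_num
          field_simp
        · rw [moeb_iteratedDeriv A B C D hdet 2 (by norm_num) u (hne u (left_mem_Icc.mpr le_rfl))]
          unfold moebG
          rw [hCuD, ← hy2def, hCdef]
          rw [show (((2:ℕ).factorial :ℕ) : ℝ) = 2 by norm_num [Nat.factorial]]
          field_simp
          ring
      rw [heq, sub_self, abs_zero]
    · intro k hk1 hkr x hx
      rw [show x = u from le_antisymm hx.2 hx.1,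
        moeb_iteratedDeriv A B C D hdet k hk1 u (hne u (left_mem_Icc.mpr le_rfl))]
      have hCbd : |C| ≤ c := by
        have hq3 : m0 * sm ≤ q ^ 3 := by
          have h : sm ^ 3 ≤ q ^ 3 := pow_le_pow_left₀ hsmpos.le hqsm 3
          calc m0 * sm = sm ^ 3 := by rw [← hsm2]; ring
            _ ≤ q ^ 3 := h
        have h1 : |C| = |y2| / (2 * q ^ 3) := by
          rw [hCdef, abs_div, abs_neg, abs_of_pos (show (0:ℝ) < 2 * q ^ 3 by positivity)]
        rw [h1]
        have h2 : |y2| / (2 * q ^ 3) ≤ K2 / (2 * (m0 * sm)) := by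
          apply div_le_div₀ hK2pos.le (hy2def ▸ hK2le u huS) (by positivity) (by linarith)
        calc |y2| / (2 * q ^ 3) ≤ K2 / (2 * (m0 * sm)) := h2
          _ = c1 := by rw [hc1def]; ring_nf
          _ ≤ c := hc1c
      have hdenbd : d ≤ |C * u + D| := by
        rw [hCuD, abs_of_pos (by positivity)]
        calc d ≤ δ1 := hdδ1
          _ = 1 / sM := hδ1def
          _ ≤ q⁻¹ := by
              rw [one_div]
              exact inv_anti₀ hqpos hqsM
      calc |moebG C D k u| ≤ Kb := hKbdef ▸ moebG_bound C D k r hk1 hkr u c d hdpos hCbd hdenbd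
        _ ≤ Ka + Kb + 1 := by linarith
  · -- main case u < v
    have hh : 0 < v - u := by linarith
    obtain ⟨P, hPdef⟩ : ∃ x : ℝ, x = φ u := ⟨_, rfl⟩
    obtain ⟨Q, hQdef⟩ : ∃ x : ℝ, x = φ v := ⟨_, rfl⟩
    obtain ⟨s, hsdef⟩ : ∃ x : ℝ, x = (Q - P) / (v - u) := ⟨_, rfl⟩
    obtain ⟨p, hpdef⟩ : ∃ x : ℝ, x = deriv φ u := ⟨_, rfl⟩
    have huS : u ∈ Icc a b := hsub (left_mem_Icc.mpr huv)
    have hppos : 0 < p := hpdef ▸ hφ' u (hIU huS)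
    have hpm : m0 ≤ p := hpdef ▸ hm0le u huS
    have hpM : p ≤ M0 := hpdef ▸ hM0ge u huS
    have hcont : ContinuousOn φ (Icc u v) := (hφ.continuousOn).mono hsubU
    have hdiffI : DifferentiableOn ℝ φ (Ioo u v) :=
      (hφ.differentiableOn (by exact_mod_cast (show r ≠ 0 by omega))).mono
        ((Ioo_subset_Icc_self).trans hsubU)
    obtain ⟨ξ, hξ, hξs⟩ := exists_deriv_eq_slope φ hlt hcont hdiffI
    have hξS : ξ ∈ Icc a b := hsub (Ioo_subset_Icc_self hξ)
    have hs_eq : s = deriv φ ξ := by rw [hsdef, hPdef, hQdef, hξs]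
    have hsm0 : m0 ≤ s := hs_eq ▸ hm0le ξ hξS
    have hsM0 : s ≤ M0 := hs_eq ▸ hM0ge ξ hξS
    have hspos : 0 < s := lt_of_lt_of_le hm0pos hsm0
    obtain ⟨lam, hlamdef⟩ : ∃ x : ℝ, x = s / p := ⟨_, rfl⟩
    have hlampos : 0 < lam := by rw [hlamdef]; positivity
    have hlamlow : m0 / M0 ≤ lam := by
      rw [hlamdef]; exact div_le_div₀ hspos.le hsm0 hppos hpM
    have hlamhigh : lam ≤ M0 / m0 := by
      rw [hlamdef]; exact div_le_div₀ hM0pos.le hsM0 hm0pos hpm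
    -- |p - s| ≤ K2 (v - u)
    have hD1 : ∀ x ∈ Icc u v, HasDerivAt (deriv φ) (iteratedDeriv 2 φ x) x := by
      intro x hx
      have := contDiffOn_hasDerivAt_iteratedDeriv hU hφ (show 1 < r by omega) (hsubU hx)
      rwa [iteratedDeriv_one] at this
    have hps : |p - s| ≤ K2 * (v - u) := by
      have h := step_bound hD1 (fun x hx => hK2le x (hsub hx))
        (Ioo_subset_Icc_self hξ) (left_mem_Icc.mpr huv)
      rw [← hpdef, ← hs_eq] at h
      exact h
    -- the normalizing factor
    obtain ⟨ρ, hρdef⟩ : ∃ x : ℝ, x = Real.sqrt (lam * s) * (v - u) := ⟨_, rfl⟩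
    have hρpos : 0 < ρ := by
      rw [hρdef]
      exact mul_pos (Real.sqrt_pos.mpr (by positivity)) hh
    have hρ2 : ρ ^ 2 = lam * s * (v - u) ^ 2 := by
      rw [hρdef, mul_pow, Real.sq_sqrt (by positivity)]
    have hρlow : m0 / sM * (v - u) ≤ ρ := by
      rw [hρdef]
      apply mul_le_mul_of_nonneg_right _ hh.le
      rw [Real.le_sqrt' (by positivity)]
      calc (m0 / sM) ^ 2 = m0 ^ 2 / M0 := by rw [div_pow, hsM2]
        _ ≤ lam * s := by
            have h1 : m0 / M0 * m0 ≤ lam * s :=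
              mul_le_mul hlamlow hsm0 hm0pos.le (by positivity)
            calc m0 ^ 2 / M0 = m0 / M0 * m0 := by ring
              _ ≤ lam * s := h1
    have hρhigh : ρ ≤ M0 / sm * (v - u) := by
      rw [hρdef]
      apply mul_le_mul_of_nonneg_right _ hh.le
      have hsq : Real.sqrt (M0 ^ 2 / m0) = M0 / sm := by
        rw [show M0 ^ 2 / m0 = (M0 / sm) ^ 2 by rw [div_pow, hsm2]]
        exact Real.sqrt_sq (by positivity)
      rw [← hsq]
      apply Real.sqrt_le_sqrt
      have h1 : lam * s ≤ M0 / m0 * M0 :=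
        mul_le_mul hlamhigh hsM0 hspos.le (by positivity)
      calc lam * s ≤ M0 / m0 * M0 := h1
        _ = M0 ^ 2 / m0 := by ring
    -- the Moebius coefficients
    obtain ⟨A0, hA0def⟩ : ∃ x : ℝ, x = Q - lam * P := ⟨_, rfl⟩
    obtain ⟨B0, hB0def⟩ : ∃ x : ℝ, x = P * lam * v - Q * u := ⟨_, rfl⟩
    obtain ⟨C0, hC0def⟩ : ∃ x : ℝ, x = 1 - lam := ⟨_, rfl⟩
    obtain ⟨D0, hD0def⟩ : ∃ x : ℝ, x = lam * v - u := ⟨_, rfl⟩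
    have hQP : Q - P = s * (v - u) := by rw [hsdef]; field_simp
    have hdet : A0 / ρ * (D0 / ρ) - B0 / ρ * (C0 / ρ) = 1 := by
      have h1 : A0 / ρ * (D0 / ρ) - B0 / ρ * (C0 / ρ) = (A0 * D0 - B0 * C0) / ρ ^ 2 := by
        ring
      have h2 : A0 * D0 - B0 * C0 = lam * (Q - P) * (v - u) := by
        rw [hA0def, hB0def, hC0def, hD0def]; ring
      rw [h1, h2, hQP, hρ2]
      field_simp
    -- denominator facts
    have hden0 : ∀ x ∈ Icc u v, m0 / M0 * (v - u) ≤ C0 * x + D0 := by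
      intro x hx
      have h1 : m0 / M0 ≤ 1 := (div_le_one hM0pos).mpr hm0M0
      have h2 : u ≤ x := hx.1
      have h3 : x ≤ v := hx.2
      have h4 : C0 * x + D0 = (x - u) + lam * (v - x) := by rw [hC0def, hD0def]; ring
      rw [h4]
      have h5 : m0 / M0 * (v - x) ≤ lam * (v - x) :=
        mul_le_mul_of_nonneg_right hlamlow (by linarith)
      have h6 : m0 / M0 * (x - u) ≤ 1 * (x - u) :=
        mul_le_mul_of_nonneg_right h1 (by linarith)
      linarith
    have hdenpos : ∀ x ∈ Icc u v, 0 < C0 * x + D0 := fun x hx =>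
      lt_of_lt_of_le (by positivity) (hden0 x hx)
    have hdenne : ∀ x ∈ Icc u v, C0 / ρ * x + D0 / ρ ≠ 0 := by
      intro x hx
      rw [show C0 / ρ * x + D0 / ρ = (C0 * x + D0) / ρ by ring]
      exact ne_of_gt (div_pos (hdenpos x hx) hρpos)
    have hdenlow : ∀ x ∈ Icc u v, d ≤ C0 / ρ * x + D0 / ρ := by
      intro x hx
      rw [show C0 / ρ * x + D0 / ρ = (C0 * x + D0) / ρ by ring]
      have e0 : δ * (M0 / sm * (v - u)) = m0 / M0 * (v - u) := by
        rw [hδdef]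
        field_simp
      have e1 : δ * ρ ≤ C0 * x + D0 := by
        calc δ * ρ ≤ δ * (M0 / sm * (v - u)) :=
              mul_le_mul_of_nonneg_left hρhigh hδpos.le
          _ = m0 / M0 * (v - u) := e0
          _ ≤ C0 * x + D0 := hden0 x hx
      calc d ≤ δ := hdδ
        _ ≤ (C0 * x + D0) / ρ := (le_div_iff₀ hρpos).mpr e1
    -- bound on C
    have hC0abs : |C0| ≤ K2 * (v - u) / m0 := by
      have h1 : C0 = (p - s) / p := by rw [hC0def, hlamdef]; field_simp
      rw [h1, abs_div, abs_of_pos hppos]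
      exact div_le_div₀ (by positivity) hps hm0pos hpm
    have hCabs : |C0 / ρ| ≤ c := by
      rw [abs_div, abs_of_pos hρpos]
      have h2 : |C0| / ρ ≤ (K2 * (v - u) / m0) / (m0 / sM * (v - u)) :=
        div_le_div₀ (by positivity) hC0abs (by positivity) hρlow
      have h3 : (K2 * (v - u) / m0) / (m0 / sM * (v - u)) = c0 := by
        rw [hc0def]
        field_simp
      calc |C0| / ρ ≤ (K2 * (v - u) / m0) / (m0 / sM * (v - u)) := h2
        _ = c0 := h3
        _ ≤ c := hc0c
    -- endpoint values
    have hdivdiv : ∀ aa bb : ℝ, bb ≠ 0 → (aa / ρ) / (bb / ρ) = aa / bb := by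
      intro aa bb hbb
      field_simp
    have hCu : C0 * u + D0 = lam * (v - u) := by rw [hC0def, hD0def]; ring
    have hCv : C0 * v + D0 = v - u := by rw [hC0def, hD0def]; ring
    have hTu : (A0 / ρ * u + B0 / ρ) / (C0 / ρ * u + D0 / ρ) = P := by
      rw [show A0 / ρ * u + B0 / ρ = (A0 * u + B0) / ρ by ring,
        show C0 / ρ * u + D0 / ρ = (C0 * u + D0) / ρ by ring,
        hdivdiv _ _ (by rw [hCu]; positivity),
        show A0 * u + B0 = lam * (v - u) * P by rw [hA0def, hB0def]; ring, hCu]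
      exact mul_div_cancel_left₀ P (by positivity)
    have hTv : (A0 / ρ * v + B0 / ρ) / (C0 / ρ * v + D0 / ρ) = Q := by
      rw [show A0 / ρ * v + B0 / ρ = (A0 * v + B0) / ρ by ring,
        show C0 / ρ * v + D0 / ρ = (C0 * v + D0) / ρ by ring,
        hdivdiv _ _ (by rw [hCv]; positivity),
        show A0 * v + B0 = (v - u) * Q by rw [hA0def, hB0def]; ring, hCv]
      exact mul_div_cancel_left₀ Q (by positivity)
    -- first derivative at u
    have hT1u : moebG (C0 / ρ) (D0 / ρ) 1 u = p := by
      have h3 : (C0 / ρ * u + D0 / ρ) ^ 2 = 1 / p := by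
        rw [show C0 / ρ * u + D0 / ρ = (C0 * u + D0) / ρ by ring, hCu, div_pow, hρ2,
          hlamdef]
        rw [div_eq_div_iff (by positivity) (by positivity)]
        field_simp
      unfold moebG
      simp only [Nat.factorial_one, Nat.cast_one, pow_zero, one_mul]
      rw [show (1 + 1 : ℕ) = 2 from rfl, h3]
      simp
    refine ⟨A0 / ρ, B0 / ρ, C0 / ρ, D0 / ρ, hdet, hdenne, ?_, ?_, ?_⟩
    · -- images agree
      have hφim : φ '' Icc u v = Icc (φ u) (φ v) :=
        image_Icc_of_deriv_pos huv hcont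
          (fun x hx => hφ' x (hsubU (Ioo_subset_Icc_self hx)))
      have hTim : (fun x : ℝ => (A0 / ρ * x + B0 / ρ) / (C0 / ρ * x + D0 / ρ)) '' Icc u v
          = Icc (φ u) (φ v) := by
        rw [image_Icc_of_deriv_pos huv
          (fun x hx => (moeb_hasDerivAt _ _ _ _ hdet x (hdenne x hx)).continuousAt.continuousWithinAt)
          (fun x hx => by
            rw [(moeb_hasDerivAt _ _ _ _ hdet x (hdenne x (Ioo_subset_Icc_self hx))).deriv]
            have := hdenne x (Ioo_subset_Icc_self hx)
            positivity)]
        rw [hTu, hTv, hPdef, hQdef]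
      rw [hTim, hφim]
    · -- Taylor-type estimates
      have hED : ∀ k ≤ 2, ∀ x ∈ Icc u v,
          HasDerivAt (fun y => iteratedDeriv k φ y -
              iteratedDeriv k (fun x : ℝ => (A0 / ρ * x + B0 / ρ) / (C0 / ρ * x + D0 / ρ)) y)
            (iteratedDeriv (k + 1) φ x -
              iteratedDeriv (k + 1) (fun x : ℝ => (A0 / ρ * x + B0 / ρ) / (C0 / ρ * x + D0 / ρ)) x)
            x := by
        intro k hk x hx
        have h1 := contDiffOn_hasDerivAt_iteratedDeriv hU hφ (show k < r by omega) (hsubU hx)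
        have h2 := moeb_iteratedDeriv_hasDerivAt (A0 / ρ) (B0 / ρ) (C0 / ρ) (D0 / ρ) hdet k x
          (hdenne x hx)
        have h3 : moebG (C0 / ρ) (D0 / ρ) (k + 1) x
            = iteratedDeriv (k + 1)
              (fun x : ℝ => (A0 / ρ * x + B0 / ρ) / (C0 / ρ * x + D0 / ρ)) x :=
          (moeb_iteratedDeriv (A0 / ρ) (B0 / ρ) (C0 / ρ) (D0 / ρ) hdet (k + 1) (by omega) x
            (hdenne x hx)).symm
        rw [h3] at h2
        exact h1.sub h2
      have hu0 : iteratedDeriv 0 φ u -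
          iteratedDeriv 0 (fun x : ℝ => (A0 / ρ * x + B0 / ρ) / (C0 / ρ * x + D0 / ρ)) u = 0 := by
        simp only [iteratedDeriv_zero]
        rw [hTu, ← hPdef, sub_self]
      have hv0 : iteratedDeriv 0 φ v -
          iteratedDeriv 0 (fun x : ℝ => (A0 / ρ * x + B0 / ρ) / (C0 / ρ * x + D0 / ρ)) v = 0 := by
        simp only [iteratedDeriv_zero]
        rw [hTv, ← hQdef, sub_self]
      have hu1 : iteratedDeriv 1 φ u -
          iteratedDeriv 1 (fun x : ℝ => (A0 / ρ * x + B0 / ρ) / (C0 / ρ * x + D0 / ρ)) u = 0 := by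
        rw [moeb_iteratedDeriv (A0 / ρ) (B0 / ρ) (C0 / ρ) (D0 / ρ) hdet 1 le_rfl u
          (hdenne u (left_mem_Icc.mpr huv)), hT1u, iteratedDeriv_one, ← hpdef, sub_self]
      have hM3 : ∀ x ∈ Icc u v, |iteratedDeriv 3 φ x -
          iteratedDeriv 3 (fun x : ℝ => (A0 / ρ * x + B0 / ρ) / (C0 / ρ * x + D0 / ρ)) x| ≤ Ka := by
        intro x hx
        have h1 : |iteratedDeriv 3 φ x| ≤ K3 := hK3le x (hsub hx)
        have h2 : |iteratedDeriv 3
            (fun x : ℝ => (A0 / ρ * x + B0 / ρ) / (C0 / ρ * x + D0 / ρ)) x| ≤ 6 * c ^ 2 / d ^ 4 := by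
          rw [moeb_iteratedDeriv (A0 / ρ) (B0 / ρ) (C0 / ρ) (D0 / ρ) hdet 3 (by norm_num) x
            (hdenne x hx)]
          apply moebG3_bound _ _ _ _ _ hdpos hCabs
          rw [abs_of_pos (lt_of_lt_of_le hdpos (hdenlow x hx))]
          exact hdenlow x hx
        calc |iteratedDeriv 3 φ x -
            iteratedDeriv 3 (fun x : ℝ => (A0 / ρ * x + B0 / ρ) / (C0 / ρ * x + D0 / ρ)) x|
            ≤ |iteratedDeriv 3 φ x| +
              |iteratedDeriv 3 (fun x : ℝ => (A0 / ρ * x + B0 / ρ) / (C0 / ρ * x + D0 / ρ)) x| :=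
              abs_sub _ _
          _ ≤ K3 + 6 * c ^ 2 / d ^ 4 := add_le_add h1 h2
          _ = Ka := hKadef.symm
      have happ := approx_core u v hlt
        (fun k y => iteratedDeriv k φ y -
          iteratedDeriv k (fun x : ℝ => (A0 / ρ * x + B0 / ρ) / (C0 / ρ * x + D0 / ρ)) y)
        hED hu0 hv0 hu1 Ka hM3
      intro k hk x hx
      calc |iteratedDeriv k φ x -
          iteratedDeriv k (fun x : ℝ => (A0 / ρ * x + B0 / ρ) / (C0 / ρ * x + D0 / ρ)) x|
          ≤ Ka * (v - u) ^ (3 - k) := happ k hk x hx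
        _ ≤ (Ka + Kb + 1) * (v - u) ^ (3 - k) := by
            apply mul_le_mul_of_nonneg_right (by linarith) (by positivity)
    · -- uniform bounds on derivatives of T
      intro k hk1 hkr x hx
      rw [moeb_iteratedDeriv (A0 / ρ) (B0 / ρ) (C0 / ρ) (D0 / ρ) hdet k hk1 x (hdenne x hx)]
      have hdabs : d ≤ |C0 / ρ * x + D0 / ρ| := by
        rw [abs_of_pos (lt_of_lt_of_le hdpos (hdenlow x hx))]
        exact hdenlow x hx
      calc |moebG (C0 / ρ) (D0 / ρ) k x| ≤ Kb :=
            hKbdef ▸ moebG_bound _ _ k r hk1 hkr x c d hdpos hCabs hdabs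
        _ ≤ Ka + Kb + 1 := by linarith
end
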